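/- arXiv:2302.09402 — 8 statements merged into one kernel-verified Lean document; each statement's English description precedes it below -/
import Mathlib

section
/- Fix natural numbers R, B with N = R + B ≥ 2, and consider a feasible event sequence e_1, …, e_{N-1} for the null coalescent model started at state (R, B, 0). Let c be the number of events of type red-red leaf merger or blue-blue leaf merger. Then the product over t = 1, …, N-1 of the transition probabilities (the weight of event e_t divided by C(r_t + b_t + k_t, 2), evaluated at the state before event t) equals 2^{N-1-c} / ((N-1)! · C(N, B)). -/
/-- The six types of events in the null coalescent model. -/
inductive CoalEvent : Type
  | rr  -- red-red leaf merger
  | bb  -- blue-blue leaf merger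
  | rb  -- red-blue leaf merger
  | ri  -- red-internal merger
  | bi  -- blue-internal merger
  | ii  -- internal-internal merger
  deriving DecidableEq

/-- Effect of an event on the state `(r, b, k)`. -/
def coalStep : ℕ × ℕ × ℕ → CoalEvent → ℕ × ℕ × ℕ
  | (r, b, k), .rr => (r - 2, b, k + 1)
  | (r, b, k), .bb => (r, b - 2, k + 1)
  | (r, b, k), .rb => (r - 1, b - 1, k + 1)
  | (r, b, k), .ri => (r - 1, b, k)
  | (r, b, k), .bi => (r, b - 1, k)
  | (r, b, k), .ii => (r, b, k - 1)

/-- Weight of an event at state `(r, b, k)`. -/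
def coalWeight : ℕ × ℕ × ℕ → CoalEvent → ℕ
  | (r, _, _), .rr => r.choose 2
  | (_, b, _), .bb => b.choose 2
  | (r, b, _), .rb => r * b
  | (r, _, _), .ri => r
  | (_, b, _), .bi => b
  | _, .ii => 1

/-- Whether an event is allowed at state `(r, b, k)`. -/
def coalAllowed : ℕ × ℕ × ℕ → CoalEvent → Prop
  | (r, _, _), .rr => 2 ≤ r
  | (_, b, _), .bb => 2 ≤ b
  | (r, b, _), .rb => 1 ≤ r ∧ 1 ≤ b
  | (r, _, k), .ri => 1 ≤ r ∧ 1 ≤ k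
  | (_, b, k), .bi => 1 ≤ b ∧ 1 ≤ k
  | (_, _, k), .ii => 2 ≤ k

/-- Run a sequence of events from a state. -/
def coalRun : ℕ × ℕ × ℕ → List CoalEvent → ℕ × ℕ × ℕ
  | s, [] => s
  | s, e :: es => coalRun (coalStep s e) es

/-- Every event in the sequence is allowed at the state at which it occurs. -/
def coalAllAllowed : ℕ × ℕ × ℕ → List CoalEvent → Prop
  | _, [] => True
  | s, e :: es => coalAllowed s e ∧ coalAllAllowed (coalStep s e) es

/-- Product of transition probabilities of an event sequence: at state `(r, b, k)` an
event has probability (its weight) / C(r + b + k, 2). -/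
def coalProb : ℕ × ℕ × ℕ → List CoalEvent → ℚ
  | _, [] => 1
  | s, e :: es =>
      (coalWeight s e : ℚ) / ((s.1 + s.2.1 + s.2.2).choose 2 : ℚ) * coalProb (coalStep s e) es

lemma choose2_fact (p : ℕ) :
    (((p + 2).choose 2 : ℕ) : ℚ) * 2 * (p.factorial : ℚ) = ((p + 2).factorial : ℚ) := by
  have h := Nat.choose_mul_factorial_mul_factorial (show 2 ≤ p + 2 by omega)
  simp only [Nat.add_sub_cancel, show Nat.factorial 2 = 2 from rfl] at h
  exact_mod_cast h

lemma factQ (n : ℕ) : ((n + 1).factorial : ℚ) = ((n : ℚ) + 1) * (n.factorial : ℚ) := by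
  rw [Nat.factorial_succ]; push_cast; ring

lemma chooseQ_ne (m : ℕ) : (((m + 2).choose 2 : ℕ) : ℚ) ≠ 0 :=
  Nat.cast_ne_zero.mpr (Nat.choose_pos (by omega)).ne'

lemma coal_key : ∀ (es : List CoalEvent) (r b k : ℕ),
    coalAllAllowed (r, b, k) es → coalRun (r, b, k) es = (0, 0, 1) →
    coalProb (r, b, k) es *
      2 ^ (es.count CoalEvent.rr + es.count CoalEvent.bb) *
      (((r + b + k).factorial : ℚ) * ((r + b + k - 1).factorial : ℚ)) =
    (r.factorial : ℚ) * (b.factorial : ℚ) * 2 ^ (r + b + k - 1) := by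
  intro es
  induction es with
  | nil =>
    intro r b k _ hrun
    simp only [coalRun, Prod.mk.injEq] at hrun
    obtain ⟨h1, h2, h3⟩ := hrun
    subst h1; subst h2; subst h3
    norm_num [coalProb]
  | cons e t ih =>
    intro r b k hall hrun
    obtain ⟨he, ht⟩ := hall
    simp only [coalStep] at ht
    simp only [coalRun, coalStep] at hrun
    cases e with
    | rr =>
      simp only [coalAllowed] at he
      obtain ⟨p, rfl⟩ : ∃ p, r = p + 2 := ⟨r - 2, by omega⟩
      simp only [Nat.add_sub_cancel] at ht hrun
      have ihh := ih p b (k + 1) ht hrun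
      set m := p + b + k with hm
      clear_value m
      rw [show p + b + (k + 1) = m + 1 from by omega, show m + 1 - 1 = m from by omega] at ihh
      simp only [coalProb, coalStep, coalWeight, Nat.add_sub_cancel,
        List.count_cons_self, List.count_cons_of_ne (show CoalEvent.rr ≠ CoalEvent.bb by decide)]
      rw [show p + 2 + b + k = m + 2 from by omega, show m + 2 - 1 = m + 1 from by omega]
      have h1 := choose2_fact p
      have h2 := choose2_fact m
      have h3 := factQ m
      have h4 := factQ (p + 1)
      have h5 := factQ p
      have hA := chooseQ_ne m
      rw [h3] at ihh
      rw [← h1, ← h2, h3]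
      field_simp
      linear_combination (2 * (((p + 2).choose 2 : ℕ) : ℚ)) * ihh
    | bb =>
      simp only [coalAllowed] at he
      obtain ⟨q, rfl⟩ : ∃ q, b = q + 2 := ⟨b - 2, by omega⟩
      simp only [Nat.add_sub_cancel] at ht hrun
      have ihh := ih r q (k + 1) ht hrun
      set m := r + q + k with hm
      clear_value m
      rw [show r + q + (k + 1) = m + 1 from by omega, show m + 1 - 1 = m from by omega] at ihh
      simp only [coalProb, coalStep, coalWeight, Nat.add_sub_cancel,
        List.count_cons_self, List.count_cons_of_ne (show CoalEvent.bb ≠ CoalEvent.rr by decide)]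
      rw [show r + (q + 2) + k = m + 2 from by omega, show m + 2 - 1 = m + 1 from by omega]
      have h1 := choose2_fact q
      have h2 := choose2_fact m
      have h3 := factQ m
      have hA := chooseQ_ne m
      rw [h3] at ihh
      rw [← h1, ← h2, h3]
      field_simp
      linear_combination (2 * (((q + 2).choose 2 : ℕ) : ℚ)) * ihh
    | rb =>
      simp only [coalAllowed] at he
      obtain ⟨p, rfl⟩ : ∃ p, r = p + 1 := ⟨r - 1, by omega⟩
      obtain ⟨q, rfl⟩ : ∃ q, b = q + 1 := ⟨b - 1, by omega⟩
      simp only [Nat.add_sub_cancel] at ht hrun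
      have ihh := ih p q (k + 1) ht hrun
      set m := p + q + k with hm
      clear_value m
      rw [show p + q + (k + 1) = m + 1 from by omega, show m + 1 - 1 = m from by omega] at ihh
      simp only [coalProb, coalStep, coalWeight, Nat.add_sub_cancel, Nat.cast_mul,
        List.count_cons_of_ne (show CoalEvent.rb ≠ CoalEvent.rr by decide),
        List.count_cons_of_ne (show CoalEvent.rb ≠ CoalEvent.bb by decide)]
      rw [show p + 1 + (q + 1) + k = m + 2 from by omega, show m + 2 - 1 = m + 1 from by omega]
      have h2 := choose2_fact m
      have h3 := factQ m
      have hA := chooseQ_ne m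
      rw [h3] at ihh
      rw [← h2, h3, factQ p, factQ q]
      field_simp
      push_cast
      linear_combination (2 * ((p : ℚ) + 1) * ((q : ℚ) + 1)) * ihh
    | ri =>
      simp only [coalAllowed] at he
      obtain ⟨p, rfl⟩ : ∃ p, r = p + 1 := ⟨r - 1, by omega⟩
      obtain ⟨j, rfl⟩ : ∃ j, k = j + 1 := ⟨k - 1, by omega⟩
      simp only [Nat.add_sub_cancel] at ht hrun
      have ihh := ih p b (j + 1) ht hrun
      set m := p + b + j with hm
      clear_value m
      rw [show p + b + (j + 1) = m + 1 from by omega, show m + 1 - 1 = m from by omega] at ihh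
      simp only [coalProb, coalStep, coalWeight, Nat.add_sub_cancel,
        List.count_cons_of_ne (show CoalEvent.ri ≠ CoalEvent.rr by decide),
        List.count_cons_of_ne (show CoalEvent.ri ≠ CoalEvent.bb by decide)]
      rw [show p + 1 + b + (j + 1) = m + 2 from by omega, show m + 2 - 1 = m + 1 from by omega]
      have h2 := choose2_fact m
      have h3 := factQ m
      have hA := chooseQ_ne m
      rw [h3] at ihh
      rw [← h2, h3, factQ p]
      field_simp
      push_cast
      linear_combination (2 * ((p : ℚ) + 1)) * ihh
    | bi =>
      simp only [coalAllowed] at he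
      obtain ⟨q, rfl⟩ : ∃ q, b = q + 1 := ⟨b - 1, by omega⟩
      obtain ⟨j, rfl⟩ : ∃ j, k = j + 1 := ⟨k - 1, by omega⟩
      simp only [Nat.add_sub_cancel] at ht hrun
      have ihh := ih r q (j + 1) ht hrun
      set m := r + q + j with hm
      clear_value m
      rw [show r + q + (j + 1) = m + 1 from by omega, show m + 1 - 1 = m from by omega] at ihh
      simp only [coalProb, coalStep, coalWeight, Nat.add_sub_cancel,
        List.count_cons_of_ne (show CoalEvent.bi ≠ CoalEvent.rr by decide),
        List.count_cons_of_ne (show CoalEvent.bi ≠ CoalEvent.bb by decide)]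
      rw [show r + (q + 1) + (j + 1) = m + 2 from by omega, show m + 2 - 1 = m + 1 from by omega]
      have h2 := choose2_fact m
      have h3 := factQ m
      have hA := chooseQ_ne m
      rw [h3] at ihh
      rw [← h2, h3, factQ q]
      field_simp
      push_cast
      linear_combination (2 * ((q : ℚ) + 1)) * ihh
    | ii =>
      simp only [coalAllowed] at he
      obtain ⟨j, rfl⟩ : ∃ j, k = j + 2 := ⟨k - 2, by omega⟩
      simp only [Nat.add_sub_cancel] at ht hrun
      have ihh := ih r b (j + 1) ht hrun
      set m := r + b + j with hm
      clear_value m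
      rw [show r + b + (j + 1) = m + 1 from by omega, show m + 1 - 1 = m from by omega] at ihh
      simp only [coalProb, coalStep, coalWeight, Nat.add_sub_cancel,
        List.count_cons_of_ne (show CoalEvent.ii ≠ CoalEvent.rr by decide),
        List.count_cons_of_ne (show CoalEvent.ii ≠ CoalEvent.bb by decide)]
      rw [show r + b + (j + 2) = m + 2 from by omega, show m + 2 - 1 = m + 1 from by omega]
      have h2 := choose2_fact m
      have h3 := factQ m
      have hA := chooseQ_ne m
      rw [h3] at ihh
      rw [← h2, h3]
      field_simp
      rw [show j + 2 - 1 = j + 1 from rfl]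
      linear_combination (2 : ℚ) * ihh

lemma count_two_le (l : List CoalEvent) :
    l.count CoalEvent.rr + l.count CoalEvent.bb ≤ l.length := by
  induction l with
  | nil => simp
  | cons e t ih => cases e <;> simp [List.count_cons] <;> omega

/-- For any feasible event sequence of length `N - 1` for the null
coalescent model started at `(R, B, 0)` and ending at `(0, 0, 1)`, with `c` the number of
red-red or blue-blue leaf mergers, the product of transition probabilities equals
`2 ^ (N - 1 - c) / ((N - 1)! * C(N, B))`. -/
theorem coalProb_eq (R B N : ℕ) (hN : N = R + B) (hN2 : 2 ≤ N)
    (events : List CoalEvent) (hlen : events.length = N - 1)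
    (hallowed : coalAllAllowed (R, B, 0) events)
    (hfinal : coalRun (R, B, 0) events = (0, 0, 1))
    (c : ℕ) (hc : c = events.count CoalEvent.rr + events.count CoalEvent.bb) :
    coalProb (R, B, 0) events =
      (2 : ℚ) ^ (N - 1 - c) / (((N - 1).factorial : ℚ) * (N.choose B : ℚ)) := by
  have key := coal_key events R B 0 hallowed hfinal
  rw [show R + B + 0 = N from by omega, ← hc] at key
  have hcle : c ≤ N - 1 := by
    rw [hc]
    calc events.count CoalEvent.rr + events.count CoalEvent.bb ≤ events.length :=
          count_two_le events
      _ = N - 1 := hlen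
  have hBN : B ≤ N := by omega
  have hch := Nat.choose_mul_factorial_mul_factorial hBN
  rw [show N - B = R from by omega] at hch
  have hchQ : ((N.choose B : ℕ) : ℚ) * (B.factorial : ℚ) * (R.factorial : ℚ)
      = (N.factorial : ℚ) := by exact_mod_cast hch
  have hf1 : (((N - 1).factorial : ℕ) : ℚ) ≠ 0 := Nat.cast_ne_zero.mpr (Nat.factorial_ne_zero _)
  have hC : ((N.choose B : ℕ) : ℚ) ≠ 0 := Nat.cast_ne_zero.mpr (Nat.choose_pos hBN).ne'
  have h2c : (2 : ℚ) ^ c ≠ 0 := pow_ne_zero _ two_ne_zero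
  have hN0 : ((N.factorial : ℕ) : ℚ) ≠ 0 := Nat.cast_ne_zero.mpr (Nat.factorial_ne_zero _)
  have hpow : (2 : ℚ) ^ (N - 1 - c) * 2 ^ c = 2 ^ (N - 1) := by
    rw [← pow_add]; congr 1; omega
  rw [eq_div_iff (mul_ne_zero hf1 hC)]
  rw [show (2 : ℚ) ^ (N - 1 - c) = 2 ^ (N - 1) / 2 ^ c from by rw [eq_div_iff h2c, hpow]]
  rw [eq_div_iff h2c]
  apply mul_left_cancel₀ hN0
  linear_combination ((N.choose B : ℕ) : ℚ) * key + (2 : ℚ) ^ (N - 1) * hchQ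
end

section
/- Fix m ≥ 1 colors and natural numbers n_1, …, n_m with N = n_1 + ⋯ + n_m ≥ 2, and consider a feasible event sequence e_1, …, e_{N-1} for the m-color null coalescent model started with n_i unmerged leaves of color i and no internal lineages. Let c be the number of events that merge two leaves of the same color. Then the product over t = 1, …, N-1 of the transition probabilities equals 2^{N-1-c} · n_1! ⋯ n_m! / ((N-1)! · N!). -/
open scoped BigOperators

/-- Events of the m-color null coalescent model. -/
inductive MCoalEvent (m : ℕ) : Type
  | same (i : Fin m)      -- merge two leaves of the same color `i`
  | diff (i j : Fin m)    -- merge leaves of distinct colors `i` and `j`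
  | leafInt (i : Fin m)   -- merge a leaf of color `i` with an internal lineage
  | intInt                -- merge two internal lineages

/-- State: the vector of counts of unmerged leaves of each color, and the number of
extant internal lineages. -/
abbrev MCoalState (m : ℕ) := (Fin m → ℕ) × ℕ

/-- Effect of an event on the state. -/
def mcoalStep {m : ℕ} : MCoalState m → MCoalEvent m → MCoalState m
  | (v, k), .same i => (Function.update v i (v i - 2), k + 1)
  | (v, k), .diff i j =>
      (fun l => if l = i then v i - 1 else if l = j then v j - 1 else v l, k + 1)
  | (v, k), .leafInt i => (Function.update v i (v i - 1), k)
  | (v, k), .intInt => (v, k - 1)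

/-- Weight of an event at a state. -/
def mcoalWeight {m : ℕ} : MCoalState m → MCoalEvent m → ℕ
  | (v, _), .same i => (v i).choose 2
  | (v, _), .diff i j => v i * v j
  | (v, _), .leafInt i => v i
  | _, .intInt => 1

/-- Whether an event is allowed at a state. -/
def mcoalAllowed {m : ℕ} : MCoalState m → MCoalEvent m → Prop
  | (v, _), .same i => 2 ≤ v i
  | (v, _), .diff i j => i ≠ j ∧ 1 ≤ v i ∧ 1 ≤ v j
  | (v, k), .leafInt i => 1 ≤ v i ∧ 1 ≤ k
  | (_, k), .intInt => 2 ≤ k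

/-- Run a sequence of events from a state. -/
def mcoalRun {m : ℕ} : MCoalState m → List (MCoalEvent m) → MCoalState m
  | s, [] => s
  | s, e :: es => mcoalRun (mcoalStep s e) es

/-- Every event in the sequence is allowed at the state at which it occurs. -/
def mcoalAllAllowed {m : ℕ} : MCoalState m → List (MCoalEvent m) → Prop
  | _, [] => True
  | s, e :: es => mcoalAllowed s e ∧ mcoalAllAllowed (mcoalStep s e) es

/-- Product of transition probabilities of an event sequence: at state `(v, k)` an event
has probability (its weight) / C(v₁ + ⋯ + v_m + k, 2). -/
def mcoalProb {m : ℕ} : MCoalState m → List (MCoalEvent m) → ℚ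
  | _, [] => 1
  | (v, k), e :: es =>
      (mcoalWeight (v, k) e : ℚ) / (((∑ i, v i) + k).choose 2 : ℚ) *
        mcoalProb (mcoalStep (v, k) e) es

/-- Indicator that an event merges two leaves of the same color. -/
def MCoalEvent.isSame {m : ℕ} : MCoalEvent m → Bool
  | .same _ => true
  | _ => false

private lemma fac_update_eq {m : ℕ} (v : Fin m → ℕ) (i : Fin m) (b : ℕ) :
    (fun x => (((Function.update v i b) x).factorial : ℚ))
      = Function.update (fun x => ((v x).factorial : ℚ)) i ((b.factorial : ℚ)) := by
  funext x
  by_cases h : x = i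
  · subst h; simp
  · simp [Function.update_of_ne h]

private lemma sum_update_add {m : ℕ} (v : Fin m → ℕ) (i : Fin m) (b : ℕ) :
    (∑ x, Function.update v i b x) + v i = (∑ x, v x) + b := by
  rw [Finset.sum_update_of_mem (Finset.mem_univ i), Finset.sdiff_singleton_eq_erase,
    ← Finset.add_sum_erase _ v (Finset.mem_univ i)]
  omega

private lemma prod_fac_update {m : ℕ} (v : Fin m → ℕ) (i : Fin m) (b : ℕ) :
    (∏ x, ((Function.update v i b x).factorial : ℚ)) * ((v i).factorial : ℚ)
      = (∏ x, ((v x).factorial : ℚ)) * ((b.factorial : ℚ)) := by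
  have h1 : (∏ x, ((Function.update v i b x).factorial : ℚ))
      = ∏ x, Function.update (fun x => ((v x).factorial : ℚ)) i ((b.factorial : ℚ)) x :=
    Finset.prod_congr rfl fun x _ => congrFun (fac_update_eq v i b) x
  rw [h1, Finset.prod_update_of_mem (Finset.mem_univ i), Finset.sdiff_singleton_eq_erase,
    ← Finset.mul_prod_erase _ _ (Finset.mem_univ i)]
  ring

private lemma fac_eq_choose_two {n : ℕ} (h : 2 ≤ n) :
    (n.factorial : ℚ) = 2 * (n.choose 2 : ℚ) * ((n - 2).factorial : ℚ) := by
  have h2 : n.choose 2 * 2 * (n - 2).factorial = n.factorial := by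
    have h3 := Nat.choose_mul_factorial_mul_factorial h
    simpa [Nat.factorial] using h3
  rw [← h2]; push_cast; ring

private lemma prod_fac_pred {m : ℕ} (v : Fin m → ℕ) (i : Fin m) (h : 1 ≤ v i) :
    (∏ x, ((v x).factorial : ℚ))
      = (v i) * ∏ x, ((Function.update v i (v i - 1) x).factorial : ℚ) := by
  have h1 := prod_fac_update v i (v i - 1)
  have hfz : ((v i - 1).factorial : ℚ) ≠ 0 := Nat.cast_ne_zero.mpr (Nat.factorial_pos _).ne'
  have hfac : ((v i).factorial : ℚ) = (v i) * ((v i - 1).factorial : ℚ) := by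
    rw [← Nat.mul_factorial_pred (by omega : v i ≠ 0)]; push_cast; ring
  have h2 : ((v i : ℚ) * ∏ x, ((Function.update v i (v i - 1) x).factorial : ℚ))
      * ((v i - 1).factorial : ℚ) = (∏ x, ((v x).factorial : ℚ)) * ((v i - 1).factorial : ℚ) := by
    rw [hfac] at h1; linear_combination h1
  exact (mul_right_cancel₀ hfz h2).symm

private lemma prod_fac_pred2 {m : ℕ} (v : Fin m → ℕ) (i : Fin m) (h : 2 ≤ v i) :
    (∏ x, ((v x).factorial : ℚ))
      = 2 * ((v i).choose 2 : ℚ)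
        * ∏ x, ((Function.update v i (v i - 2) x).factorial : ℚ) := by
  have h1 := prod_fac_update v i (v i - 2)
  have hfz : ((v i - 2).factorial : ℚ) ≠ 0 := Nat.cast_ne_zero.mpr (Nat.factorial_pos _).ne'
  have hfac := fac_eq_choose_two h
  have h2 : (2 * ((v i).choose 2 : ℚ) * ∏ x, ((Function.update v i (v i - 2) x).factorial : ℚ))
      * ((v i - 2).factorial : ℚ) = (∏ x, ((v x).factorial : ℚ)) * ((v i - 2).factorial : ℚ) := by
    rw [hfac] at h1; linear_combination h1
  exact (mul_right_cancel₀ hfz h2).symm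

private lemma mcoal_aux {m : ℕ} (es : List (MCoalEvent m)) : ∀ (v : Fin m → ℕ) (k : ℕ),
    mcoalAllAllowed (v, k) es → mcoalRun (v, k) es = (fun _ => 0, 1) →
    mcoalProb (v, k) es * ((((∑ i, v i) + k).factorial : ℚ)) *
      (((((∑ i, v i) + k) - 1).factorial : ℚ)) * 2 ^ (es.countP MCoalEvent.isSame)
      = 2 ^ es.length * ∏ i, ((v i).factorial : ℚ) := by
  induction es with
  | nil =>
    intro v k _ hR
    simp only [mcoalRun, Prod.mk.injEq] at hR
    obtain ⟨hv, hk⟩ := hR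
    subst hk
    have hs : ∑ i, v i = 0 := by simp [hv]
    simp [mcoalProb, hs, hv, Nat.factorial]
  | cons e es ih =>
    intro v k hA hR
    obtain ⟨he, hA'⟩ := hA
    simp only [mcoalRun] at hR
    cases e with
    | same i =>
      simp only [mcoalAllowed] at he
      simp only [mcoalStep] at hA' hR
      have hvi_le : v i ≤ ∑ x, v x :=
        Finset.single_le_sum (fun _ _ => Nat.zero_le _) (Finset.mem_univ i)
      have hsum := sum_update_add v i (v i - 2)
      obtain ⟨t, ht⟩ : ∃ t, (∑ x, v x) + k = t + 2 := ⟨(∑ x, v x) + k - 2, by omega⟩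
      have ht' : (∑ x, Function.update v i (v i - 2) x) + (k + 1) = t + 1 := by omega
      have H := ih (Function.update v i (v i - 2)) (k + 1) hA' hR
      rw [ht'] at H
      simp only [Nat.add_sub_cancel] at H
      have hprod := prod_fac_pred2 v i he
      have hCt : (((t + 2).choose 2 : ℕ) : ℚ) ≠ 0 :=
        Nat.cast_ne_zero.mpr (Nat.choose_pos (by omega)).ne'
      have hF2 : ((t + 2).factorial : ℚ) = 2 * ((t + 2).choose 2 : ℚ) * (t.factorial : ℚ) := by
        simpa using fac_eq_choose_two (show 2 ≤ t + 2 by omega)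
      simp only [mcoalProb, mcoalStep, mcoalWeight, List.countP_cons, List.length_cons,
        MCoalEvent.isSame, ht, if_true]
      rw [show t + 2 - 1 = t + 1 by omega, hF2, hprod]
      field_simp
      linear_combination (2 * (((v i).choose 2 : ℕ) : ℚ)) * H
    | diff i j =>
      simp only [mcoalAllowed] at he
      obtain ⟨hij, hvi, hvj⟩ := he
      simp only [mcoalStep] at hA' hR
      have hji : j ≠ i := Ne.symm hij
      set w : Fin m → ℕ := Function.update v i (v i - 1) with hw
      have hwj : w j = v j := Function.update_of_ne hji _ _
      have hveq : (fun l => if l = i then v i - 1 else if l = j then v j - 1 else v l)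
          = Function.update w j (w j - 1) := by
        rw [hwj]
        funext l
        by_cases h2 : l = j
        · subst h2; simp [hji]
        · rw [Function.update_of_ne h2]
          by_cases h1 : l = i
          · subst h1; simp [hw]
          · simp [hw, Function.update_of_ne h1, h1, h2]
      rw [hveq] at hA' hR
      have hvi_le : v i ≤ ∑ x, v x :=
        Finset.single_le_sum (fun _ _ => Nat.zero_le _) (Finset.mem_univ i)
      have hsum1 : (∑ x, w x) + v i = (∑ x, v x) + (v i - 1) := sum_update_add v i (v i - 1)
      have hsum2 := sum_update_add w j (w j - 1)
      have hwj_le : w j ≤ ∑ x, w x :=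
        Finset.single_le_sum (fun _ _ => Nat.zero_le _) (Finset.mem_univ j)
      have h1s : v i + ∑ x ∈ Finset.univ.erase i, v x = ∑ x, v x :=
        Finset.add_sum_erase _ v (Finset.mem_univ i)
      have h2s : v j ≤ ∑ x ∈ Finset.univ.erase i, v x :=
        Finset.single_le_sum (fun _ _ => Nat.zero_le _)
          (Finset.mem_erase.mpr ⟨hji, Finset.mem_univ j⟩)
      obtain ⟨t, ht⟩ : ∃ t, (∑ x, v x) + k = t + 2 := ⟨(∑ x, v x) + k - 2, by omega⟩
      have ht' : (∑ x, Function.update w j (w j - 1) x) + (k + 1) = t + 1 := by omega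
      have H := ih (Function.update w j (w j - 1)) (k + 1) hA' hR
      rw [ht'] at H
      simp only [Nat.add_sub_cancel] at H
      have hp1 : (∏ x, ((v x).factorial : ℚ)) = (v i) * ∏ x, ((w x).factorial : ℚ) :=
        prod_fac_pred v i hvi
      have hp2 := prod_fac_pred w j (by rw [hwj]; exact hvj)
      have hprod : (∏ x, ((v x).factorial : ℚ)) = (v i : ℚ) * (v j : ℚ)
          * ∏ x, ((Function.update w j (w j - 1) x).factorial : ℚ) := by
        rw [hp1, hp2, hwj]; ring
      have hCt : (((t + 2).choose 2 : ℕ) : ℚ) ≠ 0 :=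
        Nat.cast_ne_zero.mpr (Nat.choose_pos (by omega)).ne'
      have hF2 : ((t + 2).factorial : ℚ) = 2 * ((t + 2).choose 2 : ℚ) * (t.factorial : ℚ) := by
        simpa using fac_eq_choose_two (show 2 ≤ t + 2 by omega)
      simp only [mcoalProb, mcoalStep, mcoalWeight, List.countP_cons, List.length_cons,
        MCoalEvent.isSame, ht, hveq]
      rw [show t + 2 - 1 = t + 1 by omega, hF2, hprod]
      push_cast
      field_simp
      linear_combination 2 * H
    | leafInt i =>
      simp only [mcoalAllowed] at he
      obtain ⟨hvi, hk⟩ := he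
      simp only [mcoalStep] at hA' hR
      have hvi_le : v i ≤ ∑ x, v x :=
        Finset.single_le_sum (fun _ _ => Nat.zero_le _) (Finset.mem_univ i)
      have hsum := sum_update_add v i (v i - 1)
      obtain ⟨t, ht⟩ : ∃ t, (∑ x, v x) + k = t + 2 := ⟨(∑ x, v x) + k - 2, by omega⟩
      have ht' : (∑ x, Function.update v i (v i - 1) x) + k = t + 1 := by omega
      have H := ih (Function.update v i (v i - 1)) k hA' hR
      rw [ht'] at H
      simp only [Nat.add_sub_cancel] at H
      have hprod := prod_fac_pred v i hvi
      have hCt : (((t + 2).choose 2 : ℕ) : ℚ) ≠ 0 :=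
        Nat.cast_ne_zero.mpr (Nat.choose_pos (by omega)).ne'
      have hF2 : ((t + 2).factorial : ℚ) = 2 * ((t + 2).choose 2 : ℚ) * (t.factorial : ℚ) := by
        simpa using fac_eq_choose_two (show 2 ≤ t + 2 by omega)
      simp only [mcoalProb, mcoalStep, mcoalWeight, List.countP_cons, List.length_cons,
        MCoalEvent.isSame, ht, Bool.false_eq_true, if_false]
      rw [show t + 2 - 1 = t + 1 by omega, hF2, hprod]
      field_simp
      linear_combination 2 * H
    | intInt =>
      simp only [mcoalAllowed] at he
      simp only [mcoalStep] at hA' hR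
      obtain ⟨t, ht⟩ : ∃ t, (∑ x, v x) + k = t + 2 := ⟨(∑ x, v x) + k - 2, by omega⟩
      have ht' : (∑ x, v x) + (k - 1) = t + 1 := by omega
      have H := ih v (k - 1) hA' hR
      rw [ht'] at H
      simp only [Nat.add_sub_cancel] at H
      have hCt : (((t + 2).choose 2 : ℕ) : ℚ) ≠ 0 :=
        Nat.cast_ne_zero.mpr (Nat.choose_pos (by omega)).ne'
      have hF2 : ((t + 2).factorial : ℚ) = 2 * ((t + 2).choose 2 : ℚ) * (t.factorial : ℚ) := by
        simpa using fac_eq_choose_two (show 2 ≤ t + 2 by omega)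
      simp only [mcoalProb, mcoalStep, mcoalWeight, List.countP_cons, List.length_cons,
        MCoalEvent.isSame, ht, Bool.false_eq_true, if_false]
      rw [show t + 2 - 1 = t + 1 by omega, hF2]
      field_simp
      linear_combination 2 * H

/-- For any feasible event sequence of length `N - 1` for the m-color
null coalescent model started with `n i` leaves of color `i` and no internal lineages,
ending with no unmerged leaves and one internal lineage, with `c` the number of
same-color leaf mergers, the product of transition probabilities equals
`2 ^ (N - 1 - c) * n₁! ⋯ n_m! / ((N - 1)! * N!)`. -/
theorem mcoalProb_eq (m : ℕ) (hm : 1 ≤ m) (n : Fin m → ℕ) (N : ℕ) (hN : N = ∑ i, n i)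
    (hN2 : 2 ≤ N) (events : List (MCoalEvent m)) (hlen : events.length = N - 1)
    (hallowed : mcoalAllAllowed (n, 0) events)
    (hfinal : mcoalRun (n, 0) events = (fun _ => 0, 1))
    (c : ℕ) (hc : c = events.countP MCoalEvent.isSame) :
    mcoalProb (n, 0) events =
      (2 : ℚ) ^ (N - 1 - c) * (∏ i, ((n i).factorial : ℚ)) /
        (((N - 1).factorial : ℚ) * (N.factorial : ℚ)) := by
  have E := mcoal_aux events n 0 hallowed hfinal
  rw [Nat.add_zero, ← hN, ← hc, hlen] at E
  have hcle : c ≤ N - 1 := by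
    rw [hc, ← hlen]; exact List.countP_le_length
  have hpow : (2 : ℚ) ^ (N - 1 - c) * 2 ^ c = 2 ^ (N - 1) := by
    rw [← pow_add, Nat.sub_add_cancel hcle]
  have h2c : (2 : ℚ) ^ c ≠ 0 := pow_ne_zero _ two_ne_zero
  have hfz : ((N - 1).factorial : ℚ) * (N.factorial : ℚ) ≠ 0 :=
    mul_ne_zero (Nat.cast_ne_zero.mpr (Nat.factorial_pos _).ne')
      (Nat.cast_ne_zero.mpr (Nat.factorial_pos _).ne')
  rw [eq_div_iff hfz]
  apply mul_right_cancel₀ h2c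
  linear_combination E - (∏ i, ((n i).factorial : ℚ)) * hpow
end

section
/- Let N ≥ 2 and 0 ≤ B ≤ N. For a uniformly random subset A of {1, …, N} of cardinality B (i.e., averaging over all C(N, B) such subsets), the sum ∑_{k=3}^{N} W_k(A) / (k-1) has expected value (N-2) · (B(B-1) + (N-B)(N-B-1)) / (N(N-1)), which equals (N-2) − 2B(N-B)(N-2) / (N(N-1)). Equivalently, (1 / C(N,B)) · ∑_{A ⊆ {1,…,N}, |A| = B} ∑_{k=3}^{N} W_k(A)/(k-1) = (N-2) − 2B(N-B)(N-2)/(N(N-1)) as rational numbers. -/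
open Finset

lemma nat_id (n b : ℕ) :
    (n+2) * (n+1) * n.choose b = (n+2).choose (b+2) * ((b+2)*(b+1)) := by
  have h1 := Nat.add_one_mul_choose_eq n b
  have h2 := Nat.add_one_mul_choose_eq (n+1) (b+1)
  rw [show n + 1 + 1 = n + 2 from rfl, show b + 1 + 1 = b + 2 from rfl] at h2
  calc (n+2) * (n+1) * n.choose b = (n+2) * ((n+1) * n.choose b) := by ring
    _ = (n+2) * ((n+1).choose (b+1) * (b+1)) := by rw [h1]
    _ = ((n+2) * (n+1).choose (b+1)) * (b+1) := by ring
    _ = ((n+2).choose (b+2) * (b+2)) * (b+1) := by rw [h2]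
    _ = _ := by ring

lemma I1 (N B : ℕ) (hN : 2 ≤ N) (hB : B ≤ N) :
    ((if 2 ≤ B then ((N-2).choose (B-2)) else 0 : ℕ) : ℚ) * ((N:ℚ) * ((N:ℚ)-1))
      = (N.choose B : ℚ) * (B:ℚ) * ((B:ℚ)-1) := by
  by_cases h2 : 2 ≤ B
  · obtain ⟨n, rfl⟩ : ∃ n, N = n + 2 := ⟨N - 2, by omega⟩
    obtain ⟨b, rfl⟩ : ∃ b, B = b + 2 := ⟨B - 2, by omega⟩
    simp only [h2, if_true, Nat.add_sub_cancel]
    have := nat_id n b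
    push_cast
    have : ((n:ℚ)+2) * ((n:ℚ)+1) * (n.choose b : ℚ)
        = ((n+2).choose (b+2) : ℚ) * (((b:ℚ)+2)*((b:ℚ)+1)) := by exact_mod_cast this
    ring_nf
    ring_nf at this
    linarith
  · interval_cases B <;> simp

lemma I2 (N B : ℕ) (hN : 2 ≤ N) (hB : B ≤ N) :
    (((N-2).choose B : ℕ) : ℚ) * ((N:ℚ) * ((N:ℚ)-1))
      = (N.choose B : ℚ) * ((N:ℚ)-(B:ℚ)) * ((N:ℚ)-(B:ℚ)-1) := by
  by_cases h2 : B ≤ N - 2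
  · have hsym : (N-2).choose B = (N-2).choose (N-B-2) := by
      rw [← Nat.choose_symm (by omega : B ≤ N - 2)]
      congr 1; omega
    have hsym2 : N.choose (N - B) = N.choose B := Nat.choose_symm hB
    have hnb : N - B - 2 + 2 = N - B := by omega
    have hN2 : N - 2 + 2 = N := by omega
    have key := nat_id (N-2) (N-B-2)
    have c2 : ((N - 2 + 1 : ℕ) : ℚ) = (N:ℚ) - 1 := by
      have h : N - 2 + 1 = N - 1 := by omega
      rw [h, Nat.cast_sub (by omega : 1 ≤ N)]; norm_num
    have c4 : ((N - B - 2 + 1 : ℕ) : ℚ) = (N:ℚ) - (B:ℚ) - 1 := by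
      have h : N - B - 2 + 1 = N - B - 1 := by omega
      have h2' : ((N - B - 1 : ℕ) : ℚ) = ((N-B:ℕ):ℚ) - 1 :=
        Nat.cast_sub (by omega : 1 ≤ N - B)
      rw [h, h2', Nat.cast_sub hB]
    have kq : ((N-2+2:ℕ):ℚ) * ((N-2+1:ℕ):ℚ) * ((N-2).choose (N-B-2) : ℚ)
        = (((N-2+2).choose (N-B-2+2) : ℕ) : ℚ) * (((N-B-2+2:ℕ):ℚ) * ((N-B-2+1:ℕ):ℚ)) := by
      exact_mod_cast key
    rw [hN2, hnb, hsym2, c2, c4, Nat.cast_sub hB] at kq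
    rw [hsym]; linarith [kq]
  · have hz : (N-2).choose B = 0 := Nat.choose_eq_zero_of_lt (by omega)
    rw [hz]
    have : B = N ∨ B = N - 1 := by omega
    rcases this with rfl | rfl
    · simp
    · have h0 : (N:ℚ) - ((N-1:ℕ):ℚ) - 1 = 0 := by
        rw [Nat.cast_sub (by omega : 1 ≤ N)]; ring
      rw [h0]; simp

lemma filter_notmem_powersetCard (s : Finset ℕ) (a : ℕ) (B : ℕ) :
    (s.powersetCard B).filter (fun A => a ∉ A) = (s.erase a).powersetCard B := by
  ext A
  simp only [mem_filter, mem_powersetCard, subset_erase]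
  tauto

lemma card_filter_mem_powersetCard {s : Finset ℕ} {a : ℕ} (ha : a ∈ s) (B : ℕ) :
    ((s.powersetCard (B+1)).filter (fun A => a ∈ A)).card
      = ((s.erase a).powersetCard B).card := by
  apply Finset.card_bij (fun A _ => A.erase a)
  · rintro A hA
    simp only [mem_filter, mem_powersetCard] at hA
    simp only [mem_powersetCard, subset_erase]
    exact ⟨⟨(erase_subset a A).trans hA.1.1, notMem_erase a A⟩,
      by rw [card_erase_of_mem hA.2, hA.1.2]; rfl⟩
  · rintro A hA A' hA' h
    simp only [mem_filter] at hA hA'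
    rw [← insert_erase hA.2, ← insert_erase hA'.2, h]
  · rintro C hC
    simp only [mem_powersetCard, subset_erase] at hC
    refine ⟨insert a C, ?_, by rw [erase_insert hC.1.2]⟩
    simp only [mem_filter, mem_powersetCard, mem_insert, true_or, and_true]
    exact ⟨insert_subset ha hC.1.1, by rw [card_insert_of_notMem hC.1.2, hC.2]⟩

lemma card_pair_in {s : Finset ℕ} {j k : ℕ} (hj : j ∈ s) (hk : k ∈ s) (hjk : j ≠ k) (B : ℕ) :
    ((s.powersetCard (B+2)).filter (fun A => j ∈ A ∧ k ∈ A)).card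
      = (s.card - 2).choose B := by
  have h1 : (s.powersetCard (B+2)).filter (fun A => j ∈ A ∧ k ∈ A)
      = ((s.powersetCard (B+2)).filter (fun A => j ∈ A)).filter (fun A => k ∈ A) := by
    rw [filter_filter]
  have hks : k ∈ s.erase j := mem_erase.mpr ⟨hjk.symm, hk⟩
  have h2 : (((s.erase j).powersetCard (B+1)).filter (fun A => k ∈ A)).card
      = (((s.erase j).erase k).powersetCard B).card := card_filter_mem_powersetCard hks B
  -- transport the filter (k ∈ ·) across the bijection used above
  have h3 : (((s.powersetCard (B+2)).filter (fun A => j ∈ A)).filter (fun A => k ∈ A)).card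
      = (((s.erase j).powersetCard (B+1)).filter (fun A => k ∈ A)).card := by
    apply Finset.card_bij (fun A _ => A.erase j)
    · rintro A hA
      simp only [mem_filter, mem_powersetCard] at hA
      simp only [mem_filter, mem_powersetCard, subset_erase]
      exact ⟨⟨⟨(erase_subset j A).trans hA.1.1.1, notMem_erase j A⟩,
        by rw [card_erase_of_mem hA.1.2, hA.1.1.2]; rfl⟩, mem_erase.mpr ⟨hjk.symm, hA.2⟩⟩
    · rintro A hA A' hA' h
      simp only [mem_filter] at hA hA'
      rw [← insert_erase hA.1.2, ← insert_erase hA'.1.2, h]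
    · rintro C hC
      simp only [mem_filter, mem_powersetCard, subset_erase] at hC
      refine ⟨insert j C, ?_, by rw [erase_insert hC.1.1.2]⟩
      simp only [mem_filter, mem_powersetCard, mem_insert, true_or, and_true]
      exact ⟨⟨insert_subset hj hC.1.1.1,
        by rw [card_insert_of_notMem hC.1.1.2, hC.1.2]⟩, Or.inr hC.2⟩
  rw [h1, h3, h2, card_powersetCard]
  congr 1
  rw [card_erase_of_mem hks, card_erase_of_mem hj]
  omega

lemma card_pair_in_small {s : Finset ℕ} {j k : ℕ} (hjk : j ≠ k) {B : ℕ} (hB : B ≤ 1) :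
    ((s.powersetCard B).filter (fun A => j ∈ A ∧ k ∈ A)).card = 0 := by
  rw [Finset.card_eq_zero, Finset.filter_eq_empty_iff]
  rintro A hA ⟨hjA, hkA⟩
  simp only [mem_powersetCard] at hA
  have : 2 ≤ A.card := by
    have := Finset.card_le_card (Finset.insert_subset hjA (Finset.singleton_subset_iff.mpr hkA))
    simpa [Finset.card_insert_of_notMem, hjk] using this
  omega

section
open Finset

lemma count_iff (N B : ℕ) (hN : 2 ≤ N) {j k : ℕ} (hj : j ∈ Finset.Icc 1 N)
    (hk : k ∈ Finset.Icc 1 N) (hjk : j ≠ k) :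
    (((Finset.Icc 1 N).powersetCard B).filter (fun A => j ∈ A ↔ k ∈ A)).card
      = (if 2 ≤ B then (N-2).choose (B-2) else 0) + (N-2).choose B := by
  have hscard : (Finset.Icc 1 N).card = N := by rw [Nat.card_Icc]; omega
  have hks : k ∈ (Finset.Icc 1 N).erase j := mem_erase.mpr ⟨hjk.symm, hk⟩
  have hsplit : ((Finset.Icc 1 N).powersetCard B).filter (fun A => j ∈ A ↔ k ∈ A)
      = ((Finset.Icc 1 N).powersetCard B).filter (fun A => (j ∈ A ∧ k ∈ A))
        ∪ ((Finset.Icc 1 N).powersetCard B).filter (fun A => (j ∉ A ∧ k ∉ A)) := by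
    rw [← filter_or]
    apply filter_congr
    intro A _
    constructor <;> intro h <;> tauto
  rw [hsplit, card_union_of_disjoint]
  · congr 1
    · by_cases h2 : 2 ≤ B
      · obtain ⟨b, rfl⟩ : ∃ b, B = b + 2 := ⟨B - 2, by omega⟩
        rw [card_pair_in hj hk hjk b, hscard]
        simp [h2]
      · rw [card_pair_in_small hjk (by omega : B ≤ 1)]
        simp [h2]
    · have hout : ((Finset.Icc 1 N).powersetCard B).filter (fun A => j ∉ A ∧ k ∉ A)
          = ((((Finset.Icc 1 N).erase j).erase k)).powersetCard B := by
        rw [← filter_filter, filter_notmem_powersetCard, filter_notmem_powersetCard]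
      rw [hout, card_powersetCard, card_erase_of_mem hks, card_erase_of_mem hj, hscard,
        show N - 1 - 1 = N - 2 from by omega]
  · rw [disjoint_left]
    rintro A hA hA'
    simp only [mem_filter] at hA hA'
    exact hA'.2.1 hA.2.1

end

open scoped BigOperators

/-- `W_k(A)`: the number of positions `j ∈ {1, …, k-1}` having the same color as
position `k`, where `A` is the set of blue positions. -/
def sameColorCount (k : ℕ) (A : Finset ℕ) : ℕ :=
  ((Finset.Icc 1 (k - 1)).filter fun j => j ∈ A ↔ k ∈ A).card

/-- For a uniformly random subset `A ⊆ {1, …, N}` of cardinality `B`,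
the expected value of `∑_{k=3}^{N} W_k(A) / (k - 1)` equals
`(N - 2) - 2B(N - B)(N - 2) / (N(N - 1))`. -/
theorem expected_same_attachments_alpha_one (N B : ℕ) (hN : 2 ≤ N) (hB : B ≤ N) :
    (1 / (N.choose B : ℚ)) *
        ∑ A ∈ Finset.powersetCard B (Finset.Icc 1 N),
          ∑ k ∈ Finset.Icc 3 N, (sameColorCount k A : ℚ) / ((k : ℚ) - 1) =
      ((N : ℚ) - 2) -
        2 * (B : ℚ) * ((N : ℚ) - (B : ℚ)) * ((N : ℚ) - 2) / ((N : ℚ) * ((N : ℚ) - 1)) := by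
  classical
  set D : ℕ := (if 2 ≤ B then (N-2).choose (B-2) else 0) + (N-2).choose B with hD
  rw [Finset.sum_comm]
  have hk' : ∀ k ∈ Finset.Icc 3 N,
      (∑ A ∈ Finset.powersetCard B (Finset.Icc 1 N),
        (sameColorCount k A : ℚ) / ((k : ℚ) - 1)) = (D : ℚ) := by
    intro k hk
    rw [Finset.mem_Icc] at hk
    have hk3 : (3:ℚ) ≤ (k:ℚ) := by exact_mod_cast hk.1
    have hknum : (k:ℚ) - 1 ≠ 0 := by linarith
    rw [← Finset.sum_div]
    have hsum : ∑ A ∈ Finset.powersetCard B (Finset.Icc 1 N),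
        (sameColorCount k A : ℚ) = (((k-1) * D : ℕ) : ℚ) := by
      rw [← Nat.cast_sum]
      congr 1
      calc ∑ A ∈ Finset.powersetCard B (Finset.Icc 1 N), sameColorCount k A
          = ∑ A ∈ Finset.powersetCard B (Finset.Icc 1 N),
              ∑ j ∈ Finset.Icc 1 (k-1), if (j ∈ A ↔ k ∈ A) then 1 else 0 :=
            Finset.sum_congr rfl (fun A _ => Finset.card_filter _ _)
        _ = ∑ j ∈ Finset.Icc 1 (k-1), ∑ A ∈ Finset.powersetCard B (Finset.Icc 1 N),
              if (j ∈ A ↔ k ∈ A) then 1 else 0 := Finset.sum_comm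
        _ = ∑ j ∈ Finset.Icc 1 (k-1), D := by
            refine Finset.sum_congr rfl (fun j hj => ?_)
            rw [Finset.mem_Icc] at hj
            rw [← Finset.card_filter]
            exact count_iff N B hN (Finset.mem_Icc.mpr ⟨hj.1, by omega⟩)
              (Finset.mem_Icc.mpr ⟨by omega, hk.2⟩) (by omega)
        _ = (k-1) * D := by
            rw [Finset.sum_const, Nat.card_Icc, smul_eq_mul]
            congr 1
    rw [hsum, Nat.cast_mul, Nat.cast_sub (by omega : 1 ≤ k), Nat.cast_one]
    rw [mul_comm, mul_div_assoc, div_self hknum, mul_one]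
  rw [Finset.sum_congr rfl hk', Finset.sum_const, Nat.card_Icc, nsmul_eq_mul]
  have hcard : ((N + 1 - 3 : ℕ) : ℚ) = (N:ℚ) - 2 := by
    have h : N + 1 - 3 = N - 2 := by omega
    rw [h, Nat.cast_sub hN]; norm_num
  rw [hcard]
  have i1 := I1 N B hN hB
  have i2 := I2 N B hN hB
  have hC : (N.choose B : ℚ) ≠ 0 := by
    exact_mod_cast (Nat.choose_pos hB).ne'
  have h2N : (2:ℚ) ≤ (N:ℚ) := by exact_mod_cast hN
  have hNq : (N:ℚ) ≠ 0 := by linarith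
  have hN1 : (N:ℚ) - 1 ≠ 0 := by intro h; linarith
  have hDq : (D:ℚ) = ((if 2 ≤ B then ((N-2).choose (B-2)) else 0 : ℕ) : ℚ)
      + (((N-2).choose B : ℕ) : ℚ) := by rw [hD]; push_cast; ring
  rw [hDq]
  obtain ⟨x, hx⟩ : ∃ x : ℚ, ((if 2 ≤ B then ((N-2).choose (B-2)) else 0 : ℕ) : ℚ) = x :=
    ⟨_, rfl⟩
  obtain ⟨y, hy⟩ : ∃ y : ℚ, (((N-2).choose B : ℕ) : ℚ) = y := ⟨_, rfl⟩
  obtain ⟨c, hc⟩ : ∃ c : ℚ, ((N.choose B : ℕ) : ℚ) = c := ⟨_, rfl⟩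
  rw [hx] at i1 ⊢
  rw [hy] at i2 ⊢
  rw [hc] at i1 i2 hC ⊢
  field_simp
  linear_combination ((N:ℚ)-2) * i1 + ((N:ℚ)-2) * i2
end

section
/- Let N ≥ 2, 1 ≤ B ≤ N-1, and let α ≥ 1 be a real number. For a uniformly random subset A of {1, …, N} of cardinality B, the expected value of ∑_{k=3}^{N} α·W_k(A) / ((k-1-W_k(A)) + α·W_k(A)) equals ∑_{k=3}^{N} [ (B/N) · ∑_{i=0}^{k-1} (α i / ((k-1-i) + α i)) · C(k-1, i) · C(N-k, B-(i+1)) / C(N-1, B-1) + ((N-B)/N) · ∑_{i=0}^{k-1} (α i / ((k-1-i) + α i)) · C(k-1, i) · C(N-k, N-B-(i+1)) / C(N-1, N-B-1) ], with the convention that C(a, b) = 0 whenever b < 0 or b > a. -/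
open scoped BigOperators

/-- Binomial coefficient `C(a, b)` for an integer lower index, with the convention that
it is `0` when `b < 0` (and, via `Nat.choose`, when `b > a`). -/
noncomputable def binR (a : ℕ) (b : ℤ) : ℝ :=
  if 0 ≤ b then (a.choose b.toNat : ℝ) else 0

open Finset

lemma decomp {N k : ℕ} (hk1 : 1 ≤ k) {A : Finset ℕ}
    (hA : A ⊆ Finset.Icc 1 N) (hkA : k ∈ A) :
    A = (A ∩ Finset.Icc 1 (k-1)) ∪ insert k (A ∩ Finset.Icc (k+1) N) := by
  ext x
  simp only [mem_union, mem_insert, mem_inter, mem_Icc]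
  constructor
  · intro hx
    have hb := mem_Icc.mp (hA hx)
    rcases lt_trichotomy x k with h | h | h
    · exact Or.inl ⟨hx, hb.1, by omega⟩
    · exact Or.inr (Or.inl h)
    · exact Or.inr (Or.inr ⟨hx, by omega, hb.2⟩)
  · rintro (⟨h, _⟩ | h | ⟨h, _⟩)
    · exact h
    · exact h ▸ hkA
    · exact h

lemma count_blue (N B k i : ℕ) (hk1 : 1 ≤ k) (hkN : k ≤ N) (hi : i + 1 ≤ B) :
    (((Finset.powersetCard B (Finset.Icc 1 N)).filter
      (fun A => k ∈ A ∧ (A ∩ Finset.Icc 1 (k-1)).card = i)).card : ℝ)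
    = (k-1).choose i * (N-k).choose (B-1-i) := by
  have key : ((Finset.powersetCard B (Finset.Icc 1 N)).filter
      (fun A => k ∈ A ∧ (A ∩ Finset.Icc 1 (k-1)).card = i)).card
      = (Finset.powersetCard i (Finset.Icc 1 (k-1)) ×ˢ
         Finset.powersetCard (B-1-i) (Finset.Icc (k+1) N)).card := by
    apply Finset.card_bij' (fun A _ => (A ∩ Finset.Icc 1 (k-1), A ∩ Finset.Icc (k+1) N))
      (fun p _ => p.1 ∪ insert k p.2)
    · intro A hA
      simp only [mem_filter, Finset.mem_powersetCard] at hA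
      obtain ⟨⟨hAs, hAc⟩, hkA, hAi⟩ := hA
      have hdec := decomp hk1 hAs hkA
      have hknR : k ∉ A ∩ Finset.Icc (k+1) N := by
        simp [mem_Icc]
      have hdisj : Disjoint (A ∩ Finset.Icc 1 (k-1)) (insert k (A ∩ Finset.Icc (k+1) N)) := by
        rw [Finset.disjoint_left]
        intro x hx hx'
        simp only [mem_inter, mem_Icc, mem_insert] at hx hx'
        rcases hx' with h | ⟨_, h, _⟩ <;> omega
      have hcard : B = i + (1 + (A ∩ Finset.Icc (k+1) N).card) := by
        have h := congrArg Finset.card hdec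
        rw [Finset.card_union_of_disjoint hdisj,
          Finset.card_insert_of_notMem hknR, hAi, hAc] at h
        omega
      simp only [Finset.mem_product, Finset.mem_powersetCard]
      exact ⟨⟨Finset.inter_subset_right, hAi⟩, ⟨Finset.inter_subset_right, by omega⟩⟩
    · intro p hp
      simp only [Finset.mem_product, Finset.mem_powersetCard] at hp
      obtain ⟨⟨h1s, h1c⟩, h2s, h2c⟩ := hp
      have hknp2 : k ∉ p.2 := fun h => by have := mem_Icc.mp (h2s h); omega
      have hdisj : Disjoint p.1 (insert k p.2) := by
        rw [Finset.disjoint_left]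
        intro x hx hx'
        have h1 := mem_Icc.mp (h1s hx)
        simp only [mem_insert] at hx'
        rcases hx' with h | h
        · omega
        · have := mem_Icc.mp (h2s h); omega
      simp only [mem_filter, Finset.mem_powersetCard]
      refine ⟨⟨?_, ?_⟩, ?_, ?_⟩
      · intro x hx
        simp only [mem_union, mem_insert] at hx
        rcases hx with h | h | h
        · have := mem_Icc.mp (h1s h); exact mem_Icc.mpr ⟨this.1, by omega⟩
        · exact mem_Icc.mpr ⟨by omega, by omega⟩
        · have := mem_Icc.mp (h2s h); exact mem_Icc.mpr ⟨by omega, this.2⟩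
      · rw [Finset.card_union_of_disjoint hdisj, Finset.card_insert_of_notMem hknp2,
          h1c, h2c]; omega
      · simp
      · have : (p.1 ∪ insert k p.2) ∩ Finset.Icc 1 (k-1) = p.1 := by
          ext x
          simp only [mem_inter, mem_union, mem_insert, mem_Icc]
          constructor
          · rintro ⟨h | h | h, hb⟩
            · exact h
            · omega
            · have := mem_Icc.mp (h2s h); omega
          · intro h
            exact ⟨Or.inl h, mem_Icc.mp (h1s h)⟩
        rw [this, h1c]
    · intro A hA
      simp only [mem_filter, Finset.mem_powersetCard] at hA
      exact (decomp hk1 hA.1.1 hA.2.1).symm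
    · intro p hp
      simp only [Finset.mem_product, Finset.mem_powersetCard] at hp
      obtain ⟨⟨h1s, h1c⟩, h2s, h2c⟩ := hp
      have e1 : (p.1 ∪ insert k p.2) ∩ Finset.Icc 1 (k-1) = p.1 := by
        ext x
        simp only [mem_inter, mem_union, mem_insert, mem_Icc]
        constructor
        · rintro ⟨h | h | h, hb⟩
          · exact h
          · omega
          · have := mem_Icc.mp (h2s h); omega
        · intro h
          exact ⟨Or.inl h, mem_Icc.mp (h1s h)⟩
      have e2 : (p.1 ∪ insert k p.2) ∩ Finset.Icc (k+1) N = p.2 := by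
        ext x
        simp only [mem_inter, mem_union, mem_insert, mem_Icc]
        constructor
        · rintro ⟨h | h | h, hb⟩
          · have := mem_Icc.mp (h1s h); omega
          · omega
          · exact h
        · intro h
          exact ⟨Or.inr (Or.inr h), mem_Icc.mp (h2s h)⟩
      rw [e1, e2]
  rw [key, Finset.card_product, Finset.card_powersetCard, Finset.card_powersetCard,
    Nat.card_Icc, Nat.card_Icc]
  push_cast
  congr 2 <;> omega

lemma same_of_mem {k : ℕ} {A : Finset ℕ} (h : k ∈ A) :
    sameColorCount k A = (A ∩ Finset.Icc 1 (k-1)).card := by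
  unfold sameColorCount
  have e : (Finset.Icc 1 (k-1)).filter (fun j => j ∈ A ↔ k ∈ A)
      = (Finset.Icc 1 (k-1)).filter (fun j => j ∈ A) :=
    Finset.filter_congr (fun j _ => by simp [h])
  rw [e, Finset.filter_mem_eq_inter, Finset.inter_comm]

lemma binR_of_le {a B i : ℕ} (h : i + 1 ≤ B) :
    binR a ((B:ℤ) - ((i:ℤ)+1)) = (a.choose (B-1-i) : ℝ) := by
  unfold binR
  rw [if_pos (by omega)]
  congr 2
  omega

lemma binR_neg {a B i : ℕ} (h : B ≤ i) : binR a ((B:ℤ) - ((i:ℤ)+1)) = 0 := by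
  unfold binR
  rw [if_neg (by omega)]

lemma sum_blue (N B k : ℕ) (hk1 : 1 ≤ k) (hkN : k ≤ N) (g : ℕ → ℝ) :
    ∑ A ∈ (Finset.powersetCard B (Finset.Icc 1 N)).filter (fun A => k ∈ A),
      g (sameColorCount k A)
    = ∑ i ∈ Finset.range k, g i * ((k-1).choose i * binR (N-k) ((B:ℤ) - ((i:ℤ)+1))) := by
  have hmaps : ∀ A ∈ (Finset.powersetCard B (Finset.Icc 1 N)).filter (fun A => k ∈ A),
      (A ∩ Finset.Icc 1 (k-1)).card ∈ Finset.range k := by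
    intro A hA
    have h1 : (A ∩ Finset.Icc 1 (k-1)).card ≤ k - 1 :=
      le_trans (Finset.card_le_card Finset.inter_subset_right) (by rw [Nat.card_Icc]; omega)
    exact Finset.mem_range.mpr (by omega)
  rw [← Finset.sum_fiberwise_of_maps_to hmaps (fun A => g (sameColorCount k A))]
  apply Finset.sum_congr rfl
  intro i _
  rw [Finset.filter_filter]
  by_cases hi : i + 1 ≤ B
  · have hc : ∀ A ∈ (Finset.powersetCard B (Finset.Icc 1 N)).filter
        (fun A => k ∈ A ∧ (A ∩ Finset.Icc 1 (k-1)).card = i),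
        g (sameColorCount k A) = g i := by
      intro A hA
      simp only [Finset.mem_filter] at hA
      rw [same_of_mem hA.2.1, hA.2.2]
    rw [Finset.sum_congr rfl hc, Finset.sum_const, nsmul_eq_mul, binR_of_le hi,
      count_blue N B k i hk1 hkN hi]
    ring
  · have hB : B ≤ i := by omega
    have hemp : (Finset.powersetCard B (Finset.Icc 1 N)).filter
        (fun A => k ∈ A ∧ (A ∩ Finset.Icc 1 (k-1)).card = i) = ∅ := by
      rw [Finset.filter_eq_empty_iff]
      rintro A hA ⟨hkA, hAi⟩
      rw [Finset.mem_powersetCard] at hA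
      have hkn : k ∉ A ∩ Finset.Icc 1 (k-1) := fun h => by
        have := Finset.mem_Icc.mp (Finset.mem_inter.mp h).2; omega
      have hsub : insert k (A ∩ Finset.Icc 1 (k-1)) ⊆ A :=
        Finset.insert_subset hkA Finset.inter_subset_left
      have hle := Finset.card_le_card hsub
      rw [Finset.card_insert_of_notMem hkn, hAi, hA.2] at hle
      omega
    rw [binR_neg hB, hemp, Finset.sum_empty]
    ring

lemma sum_compl (N B k : ℕ) (hk1 : 1 ≤ k) (hkN : k ≤ N) (hBN : B ≤ N) (g : ℕ → ℝ) :
    ∑ A ∈ (Finset.powersetCard B (Finset.Icc 1 N)).filter (fun A => ¬ k ∈ A),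
      g (sameColorCount k A)
    = ∑ A ∈ (Finset.powersetCard (N-B) (Finset.Icc 1 N)).filter (fun A => k ∈ A),
      g (sameColorCount k A) := by
  have hkS : k ∈ Finset.Icc 1 N := Finset.mem_Icc.mpr ⟨hk1, hkN⟩
  have hNc : (Finset.Icc 1 N).card = N := by rw [Nat.card_Icc]; omega
  apply Finset.sum_nbij' (fun A => Finset.Icc 1 N \ A) (fun A => Finset.Icc 1 N \ A)
  · intro A hA
    simp only [Finset.mem_filter, Finset.mem_powersetCard] at hA ⊢
    refine ⟨⟨Finset.sdiff_subset, ?_⟩, Finset.mem_sdiff.mpr ⟨hkS, hA.2⟩⟩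
    rw [Finset.card_sdiff_of_subset hA.1.1, hNc, hA.1.2]
  · intro A hA
    simp only [Finset.mem_filter, Finset.mem_powersetCard] at hA ⊢
    refine ⟨⟨Finset.sdiff_subset, ?_⟩, fun h => (Finset.mem_sdiff.mp h).2 hA.2⟩
    rw [Finset.card_sdiff_of_subset hA.1.1, hNc, hA.1.2]
    omega
  · intro A hA
    simp only [Finset.mem_filter, Finset.mem_powersetCard] at hA
    exact Finset.sdiff_sdiff_eq_self hA.1.1
  · intro A hA
    simp only [Finset.mem_filter, Finset.mem_powersetCard] at hA
    exact Finset.sdiff_sdiff_eq_self hA.1.1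
  · intro A hA
    simp only [Finset.mem_filter, Finset.mem_powersetCard] at hA
    congr 1
    unfold sameColorCount
    apply congrArg
    apply Finset.filter_congr
    intro j hj
    have hjS : j ∈ Finset.Icc 1 N := by
      have := Finset.mem_Icc.mp hj
      exact Finset.mem_Icc.mpr ⟨this.1, by omega⟩
    simp only [Finset.mem_sdiff, hjS, hkS, true_and]
    tauto

lemma per_k (N B k : ℕ) (hN : 2 ≤ N) (hB1 : 1 ≤ B) (hB2 : B ≤ N - 1)
    (hk1 : 1 ≤ k) (hkN : k ≤ N) (g : ℕ → ℝ) :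
    (1 / (N.choose B : ℝ)) *
        ∑ A ∈ Finset.powersetCard B (Finset.Icc 1 N), g (sameColorCount k A)
    = ((B : ℝ) / (N : ℝ)) *
        ∑ i ∈ Finset.range k,
          g i * (((k - 1).choose i : ℝ) * binR (N - k) ((B : ℤ) - ((i : ℤ) + 1)) /
            ((N - 1).choose (B - 1) : ℝ)) +
      (((N : ℝ) - (B : ℝ)) / (N : ℝ)) *
        ∑ i ∈ Finset.range k,
          g i * (((k - 1).choose i : ℝ) * binR (N - k) ((N : ℤ) - (B : ℤ) - ((i : ℤ) + 1)) /
            ((N - 1).choose (N - B - 1) : ℝ)) := by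
  have hBN : B ≤ N := by omega
  have hb2 : ∀ i : ℕ, binR (N-k) ((((N-B : ℕ)):ℤ) - ((i:ℤ)+1))
      = binR (N-k) ((N:ℤ) - (B:ℤ) - ((i:ℤ)+1)) := by
    intro i
    congr 1
    push_cast [hBN]
    ring
  rw [← Finset.sum_filter_add_sum_filter_not (Finset.powersetCard B (Finset.Icc 1 N))
    (fun A => k ∈ A) (fun A => g (sameColorCount k A)),
    sum_blue N B k hk1 hkN g, sum_compl N B k hk1 hkN hBN g, sum_blue N (N-B) k hk1 hkN g]
  simp_rw [hb2, ← mul_div_assoc]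
  rw [← Finset.sum_div, ← Finset.sum_div]
  set S1 := ∑ i ∈ Finset.range k,
    g i * (((k - 1).choose i : ℝ) * binR (N - k) ((B : ℤ) - ((i : ℤ) + 1))) with hS1
  set S2 := ∑ i ∈ Finset.range k,
    g i * (((k - 1).choose i : ℝ) * binR (N - k) ((N:ℤ) - (B:ℤ) - ((i : ℤ) + 1))) with hS2
  have hcnb : (0:ℝ) < (N.choose B : ℝ) := by exact_mod_cast Nat.choose_pos hBN
  have hd1 : (0:ℝ) < ((N-1).choose (B-1) : ℝ) := by
    exact_mod_cast Nat.choose_pos (by omega)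
  have hd2 : (0:ℝ) < ((N-1).choose (N-B-1) : ℝ) := by
    exact_mod_cast Nat.choose_pos (by omega)
  have hNpos : (0:ℝ) < (N : ℝ) := by exact_mod_cast (by omega : 0 < N)
  have key1 : (B:ℝ) * (N.choose B : ℝ) = (N:ℝ) * ((N-1).choose (B-1) : ℝ) := by
    have h := Nat.add_one_mul_choose_eq (N-1) (B-1)
    have hN' : N-1+1 = N := by omega
    have hB' : B-1+1 = B := by omega
    rw [hN', hB'] at h
    calc (B:ℝ) * (N.choose B : ℝ) = ((N.choose B * B : ℕ) : ℝ) := by push_cast; ring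
      _ = ((N * (N-1).choose (B-1) : ℕ) : ℝ) := by rw [← h]
      _ = (N:ℝ) * ((N-1).choose (B-1) : ℝ) := by push_cast; ring
  have key2 : ((N:ℝ) - (B:ℝ)) * (N.choose B : ℝ) = (N:ℝ) * ((N-1).choose (N-B-1) : ℝ) := by
    have h := Nat.add_one_mul_choose_eq (N-1) (N-B-1)
    have hN' : N-1+1 = N := by omega
    have hB' : N-B-1+1 = N-B := by omega
    rw [hN', hB', Nat.choose_symm hBN] at h
    calc ((N:ℝ) - (B:ℝ)) * (N.choose B : ℝ) = ((N.choose B * (N-B) : ℕ) : ℝ) := by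
          push_cast [hBN]; ring
      _ = ((N * (N-1).choose (N-B-1) : ℕ) : ℝ) := by rw [← h]
      _ = (N:ℝ) * ((N-1).choose (N-B-1) : ℝ) := by push_cast; ring
  have e1 : (B:ℝ)/(N:ℝ) * (1/((N-1).choose (B-1) : ℝ)) = 1/(N.choose B : ℝ) := by
    rw [div_mul_div_comm, div_eq_div_iff (by positivity) (by positivity)]
    linarith [key1]
  have e2 : ((N:ℝ)-(B:ℝ))/(N:ℝ) * (1/((N-1).choose (N-B-1) : ℝ)) = 1/(N.choose B : ℝ) := by
    rw [div_mul_div_comm, div_eq_div_iff (by positivity) (by positivity)]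
    linarith [key2]
  calc (1/(N.choose B : ℝ)) * (S1 + S2)
      = (1/(N.choose B : ℝ)) * S1 + (1/(N.choose B : ℝ)) * S2 := by ring
    _ = ((B:ℝ)/(N:ℝ) * (1/((N-1).choose (B-1) : ℝ))) * S1
        + (((N:ℝ)-(B:ℝ))/(N:ℝ) * (1/((N-1).choose (N-B-1) : ℝ))) * S2 := by rw [e1, e2]
    _ = ((B:ℝ)/(N:ℝ)) * (S1/((N-1).choose (B-1) : ℝ))
        + (((N:ℝ)-(B:ℝ))/(N:ℝ)) * (S2/((N-1).choose (N-B-1) : ℝ)) := by ring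

/-- For a uniformly random subset `A ⊆ {1, …, N}` of cardinality `B`,
the expected value of `∑_{k=3}^{N} α W_k / ((k-1-W_k) + α W_k)` is a sum over `k` of a
mixture of two hypergeometric-type sums. -/
theorem expected_same_attachments (N B : ℕ) (hN : 2 ≤ N) (hB1 : 1 ≤ B) (hB2 : B ≤ N - 1)
    (α : ℝ) (hα : 1 ≤ α) :
    (1 / (N.choose B : ℝ)) *
        ∑ A ∈ Finset.powersetCard B (Finset.Icc 1 N),
          ∑ k ∈ Finset.Icc 3 N,
            α * (sameColorCount k A : ℝ) /
              (((k : ℝ) - 1 - (sameColorCount k A : ℝ)) + α * (sameColorCount k A : ℝ)) =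
      ∑ k ∈ Finset.Icc 3 N,
        (((B : ℝ) / (N : ℝ)) *
            ∑ i ∈ Finset.range k,
              (α * (i : ℝ) / (((k : ℝ) - 1 - (i : ℝ)) + α * (i : ℝ))) *
                (((k - 1).choose i : ℝ) * binR (N - k) ((B : ℤ) - ((i : ℤ) + 1)) /
                  ((N - 1).choose (B - 1) : ℝ)) +
          (((N : ℝ) - (B : ℝ)) / (N : ℝ)) *
            ∑ i ∈ Finset.range k,
              (α * (i : ℝ) / (((k : ℝ) - 1 - (i : ℝ)) + α * (i : ℝ))) *
                (((k - 1).choose i : ℝ) * binR (N - k) ((N : ℤ) - (B : ℤ) - ((i : ℤ) + 1)) /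
                  ((N - 1).choose (N - B - 1) : ℝ))) := by
  rw [Finset.sum_comm, Finset.mul_sum]
  apply Finset.sum_congr rfl
  intro k hk
  rw [Finset.mem_Icc] at hk
  exact per_k N B k hN hB1 hB2 (by omega) hk.2
    (fun i => α * (i : ℝ) / (((k : ℝ) - 1 - (i : ℝ)) + α * (i : ℝ)))
end

section
/- Let N ≥ 1, 0 ≤ B ≤ N, 2 ≤ k ≤ N, and 0 ≤ i ≤ k-1. The number of subsets A ⊆ {1, …, N} with |A| = B and W_k(A) = i equals C(k-1, i) · ( C(N-k, B-(i+1)) + C(N-k, N-B-(i+1)) ), with the convention that C(a, b) = 0 whenever b < 0 or b > a. -/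
open scoped BigOperators

/-- Binomial coefficient `C(a, b)` for an integer lower index, with the convention that
it is `0` when `b < 0` (and, via `Nat.choose`, when `b > a`). -/
def binN (a : ℕ) (b : ℤ) : ℕ :=
  if 0 ≤ b then a.choose b.toNat else 0

lemma core (N k a c : ℕ) (hk1 : 1 ≤ k) (hk2 : k ≤ N) :
    ((Finset.powersetCard (a + c) ((Finset.Icc 1 N).erase k)).filter
        fun A => (A ∩ Finset.Icc 1 (k - 1)).card = a).card
      = (k - 1).choose a * (N - k).choose c := by
  set L := Finset.Icc 1 (k - 1) with hL
  set R := Finset.Icc (k + 1) N with hR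
  have hmem : ∀ x, x ∈ (Finset.Icc 1 N).erase k ↔ (x ∈ L ∨ x ∈ R) := by
    intro x
    simp only [Finset.mem_erase, Finset.mem_Icc, hL, hR]
    omega
  have hLR : ∀ x, x ∈ L → x ∉ R := by
    intro x; simp only [Finset.mem_Icc, hL, hR]; omega
  have key : ((Finset.powersetCard (a + c) ((Finset.Icc 1 N).erase k)).filter
        fun A => (A ∩ L).card = a).card
      = ((Finset.powersetCard a L) ×ˢ (Finset.powersetCard c R)).card := by
    apply Finset.card_nbij' (fun A => (A ∩ L, A ∩ R)) (fun p => p.1 ∪ p.2)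
    · intro A hA
      simp only [Finset.mem_coe, Finset.mem_filter, Finset.mem_powersetCard] at hA
      obtain ⟨⟨hsub, hcard⟩, ha⟩ := hA
      have hAsplit : A = (A ∩ L) ∪ (A ∩ R) := by
        ext x
        simp only [Finset.mem_union, Finset.mem_inter]
        constructor
        · intro hx
          rcases (hmem x).mp (hsub hx) with h | h
          · exact Or.inl ⟨hx, h⟩
          · exact Or.inr ⟨hx, h⟩
        · rintro (⟨h, _⟩ | ⟨h, _⟩) <;> exact h
      have hdisj : Disjoint (A ∩ L) (A ∩ R) := by
        rw [Finset.disjoint_left]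
        intro x hx hx'
        exact hLR x (Finset.mem_inter.mp hx).2 (Finset.mem_inter.mp hx').2
      have hcards : (A ∩ L).card + (A ∩ R).card = a + c := by
        rw [← Finset.card_union_of_disjoint hdisj, ← hAsplit, hcard]
      simp only [Finset.mem_coe, Finset.mem_product, Finset.mem_powersetCard]
      exact ⟨⟨Finset.inter_subset_right, ha⟩,
        Finset.inter_subset_right, by omega⟩
    · rintro ⟨X, Y⟩ hp
      simp only [Finset.mem_coe, Finset.mem_product, Finset.mem_powersetCard] at hp
      obtain ⟨⟨hX, hXc⟩, hY, hYc⟩ := hp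
      have hdisj : Disjoint X Y := by
        rw [Finset.disjoint_left]
        intro x hx hx'
        exact hLR x (hX hx) (hY hx')
      simp only [Finset.mem_coe, Finset.mem_filter, Finset.mem_powersetCard]
      refine ⟨⟨?_, ?_⟩, ?_⟩
      · intro x hx
        rw [hmem x]
        rcases Finset.mem_union.mp hx with h | h
        · exact Or.inl (hX h)
        · exact Or.inr (hY h)
      · rw [Finset.card_union_of_disjoint hdisj, hXc, hYc]
      · have : (X ∪ Y) ∩ L = X := by
          ext x
          simp only [Finset.mem_inter, Finset.mem_union]
          constructor
          · rintro ⟨h | h, hx⟩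
            · exact h
            · exact (hLR x hx (hY h)).elim
          · intro h; exact ⟨Or.inl h, hX h⟩
        rw [this, hXc]
    · intro A hA
      simp only [Finset.mem_coe, Finset.mem_filter, Finset.mem_powersetCard] at hA
      obtain ⟨⟨hsub, _⟩, _⟩ := hA
      ext x
      simp only [Finset.mem_union, Finset.mem_inter]
      constructor
      · rintro (⟨h, _⟩ | ⟨h, _⟩) <;> exact h
      · intro hx
        rcases (hmem x).mp (hsub hx) with h | h
        · exact Or.inl ⟨hx, h⟩
        · exact Or.inr ⟨hx, h⟩
    · rintro ⟨X, Y⟩ hp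
      simp only [Finset.mem_coe, Finset.mem_product, Finset.mem_powersetCard] at hp
      obtain ⟨⟨hX, _⟩, hY, _⟩ := hp
      have h1 : (X ∪ Y) ∩ L = X := by
        ext x
        simp only [Finset.mem_inter, Finset.mem_union]
        constructor
        · rintro ⟨h | h, hx⟩
          · exact h
          · exact (hLR x hx (hY h)).elim
        · intro h; exact ⟨Or.inl h, hX h⟩
      have h2 : (X ∪ Y) ∩ R = Y := by
        ext x
        simp only [Finset.mem_inter, Finset.mem_union]
        constructor
        · rintro ⟨h | h, hx⟩
          · exact absurd hx (hLR x (hX h))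
          · exact h
        · intro h; exact ⟨Or.inr h, hY h⟩
      simp [h1, h2]
  rw [key, Finset.card_product, Finset.card_powersetCard, Finset.card_powersetCard,
    hL, hR, Nat.card_Icc, Nat.card_Icc]
  congr 2 <;> omega

lemma countO (N B k a c : ℕ) (hk1 : 1 ≤ k) (hk2 : k ≤ N) (hB : B = a + c) :
    ((Finset.powersetCard B (Finset.Icc 1 N)).filter
        fun A => k ∉ A ∧ (A ∩ Finset.Icc 1 (k - 1)).card = a).card
      = (k - 1).choose a * (N - k).choose c := by
  rw [← core N k a c hk1 hk2]
  congr 1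
  ext A
  simp only [Finset.mem_filter, Finset.mem_powersetCard, Finset.subset_erase, hB]
  tauto

lemma countI (N B k a c : ℕ) (hk1 : 1 ≤ k) (hk2 : k ≤ N) (hB : B = a + c + 1) :
    ((Finset.powersetCard B (Finset.Icc 1 N)).filter
        fun A => k ∈ A ∧ (A ∩ Finset.Icc 1 (k - 1)).card = a).card
      = (k - 1).choose a * (N - k).choose c := by
  rw [← core N k a c hk1 hk2]
  have hkL : k ∉ Finset.Icc 1 (k - 1) := by simp [Finset.mem_Icc]; omega
  apply Finset.card_nbij' (fun A => A.erase k) (fun A => insert k A)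
  · intro A hA
    simp only [Finset.mem_coe, Finset.mem_filter, Finset.mem_powersetCard] at hA ⊢
    obtain ⟨⟨hsub, hcard⟩, hkA, ha⟩ := hA
    refine ⟨⟨?_, ?_⟩, ?_⟩
    · exact Finset.erase_subset_erase k hsub
    · rw [Finset.card_erase_of_mem hkA, hcard, hB]; omega
    · rw [Finset.erase_inter, Finset.erase_eq_of_notMem]
      · exact ha
      · exact fun h => hkL (Finset.mem_inter.mp h).2
  · intro A hA
    simp only [Finset.mem_coe, Finset.mem_filter, Finset.mem_powersetCard, Finset.subset_erase] at hA ⊢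
    obtain ⟨⟨⟨hsub, hkA⟩, hcard⟩, ha⟩ := hA
    refine ⟨⟨?_, ?_⟩, Finset.mem_insert_self k A, ?_⟩
    · exact Finset.insert_subset (by simp [Finset.mem_Icc]; omega) hsub
    · rw [Finset.card_insert_of_notMem hkA, hcard, hB]
    · rw [Finset.insert_inter_of_notMem hkL, ha]
  · intro A hA
    simp only [Finset.mem_coe, Finset.mem_filter] at hA
    exact Finset.insert_erase hA.2.1
  · intro A hA
    simp only [Finset.mem_coe, Finset.mem_filter, Finset.mem_powersetCard, Finset.subset_erase] at hA
    exact Finset.erase_insert hA.1.1.2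

lemma binN_eq (a : ℕ) (b : ℤ) (m : ℕ) (h : b = (m : ℤ)) : binN a b = a.choose m := by
  subst h; simp [binN]

lemma binN_neg (a : ℕ) (b : ℤ) (h : b < 0) : binN a b = 0 := by
  simp [binN, not_le.mpr h]

lemma scc_in (k : ℕ) (A : Finset ℕ) (hkA : k ∈ A) :
    sameColorCount k A = (A ∩ Finset.Icc 1 (k - 1)).card := by
  unfold sameColorCount
  rw [Finset.filter_congr (q := fun j => j ∈ A) (fun j _ => by simp [hkA]),
    Finset.filter_mem_eq_inter, Finset.inter_comm]

lemma scc_out (k : ℕ) (A : Finset ℕ) (hkA : k ∉ A) :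
    sameColorCount k A = (k - 1) - (A ∩ Finset.Icc 1 (k - 1)).card := by
  unfold sameColorCount
  rw [Finset.filter_congr (q := fun j => ¬ (j ∈ A)) (fun j _ => by simp [hkA]),
    Finset.filter_not, Finset.card_sdiff_of_subset (Finset.filter_subset _ _),
    Finset.filter_mem_eq_inter, Finset.inter_comm, Nat.card_Icc]
  omega

lemma emptyI (N B k a : ℕ) (hB : B < a + 1) :
    ((Finset.powersetCard B (Finset.Icc 1 N)).filter
        fun A => k ∈ A ∧ (A ∩ Finset.Icc 1 (k - 1)).card = a).card = 0 := by
  rw [Finset.card_eq_zero, Finset.filter_eq_empty_iff]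
  rintro A hA ⟨hkA, ha⟩
  rw [Finset.mem_powersetCard] at hA
  have hkL : k ∉ Finset.Icc 1 (k - 1) := by simp [Finset.mem_Icc]; omega
  have h1 : A ∩ Finset.Icc 1 (k - 1) ⊆ A.erase k := by
    intro x hx
    rw [Finset.mem_erase]
    rcases Finset.mem_inter.mp hx with ⟨h, h'⟩
    exact ⟨fun he => hkL (he ▸ h'), h⟩
  have h2 := Finset.card_le_card h1
  have hB1 : 1 ≤ B := hA.2 ▸ Finset.card_pos.mpr ⟨k, hkA⟩
  rw [ha, Finset.card_erase_of_mem hkA, hA.2] at h2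
  omega

lemma emptyO (N B k a : ℕ) (hB : B < a) :
    ((Finset.powersetCard B (Finset.Icc 1 N)).filter
        fun A => k ∉ A ∧ (A ∩ Finset.Icc 1 (k - 1)).card = a).card = 0 := by
  rw [Finset.card_eq_zero, Finset.filter_eq_empty_iff]
  rintro A hA ⟨hkA, ha⟩
  rw [Finset.mem_powersetCard] at hA
  have := Finset.card_le_card (Finset.inter_subset_left (s₂ := Finset.Icc 1 (k - 1)) (s₁ := A))
  rw [ha, hA.2] at this
  omega

/-- The number of subsets `A ⊆ {1, …, N}` with `|A| = B` and
`W_k(A) = i` equals `C(k-1, i) · (C(N-k, B-(i+1)) + C(N-k, N-B-(i+1)))`. -/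
theorem card_sameColorCount_eq (N B k i : ℕ) (hN : 1 ≤ N) (hB : B ≤ N) (hk1 : 2 ≤ k)
    (hk2 : k ≤ N) (hi : i ≤ k - 1) :
    ((Finset.powersetCard B (Finset.Icc 1 N)).filter fun A => sameColorCount k A = i).card =
      (k - 1).choose i *
        (binN (N - k) ((B : ℤ) - ((i : ℤ) + 1)) +
          binN (N - k) ((N : ℤ) - (B : ℤ) - ((i : ℤ) + 1))) := by
  set s := Finset.powersetCard B (Finset.Icc 1 N) with hs
  -- split by membership of k
  have hsplit : (s.filter fun A => sameColorCount k A = i).card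
      = (s.filter fun A => k ∈ A ∧ (A ∩ Finset.Icc 1 (k - 1)).card = i).card
        + (s.filter fun A => k ∉ A ∧ (A ∩ Finset.Icc 1 (k - 1)).card = (k - 1) - i).card := by
    have h1 : s.filter (fun A => sameColorCount k A = i)
        = (s.filter fun A => k ∈ A ∧ (A ∩ Finset.Icc 1 (k - 1)).card = i)
          ∪ (s.filter fun A => k ∉ A ∧ (A ∩ Finset.Icc 1 (k - 1)).card = (k - 1) - i) := by
      rw [← Finset.filter_or]
      apply Finset.filter_congr
      intro A hA
      have hcardL : (A ∩ Finset.Icc 1 (k - 1)).card ≤ k - 1 := by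
        calc (A ∩ Finset.Icc 1 (k - 1)).card ≤ (Finset.Icc 1 (k - 1)).card := Finset.card_le_card Finset.inter_subset_right
        _ = k - 1 := by rw [Nat.card_Icc]; omega
      by_cases hkA : k ∈ A
      · rw [scc_in k A hkA]
        simp only [hkA, true_and, not_true, false_and, or_false]
      · rw [scc_out k A hkA]
        simp only [hkA, false_and, not_false_iff, true_and, false_or]
        omega
    rw [h1, Finset.card_union_of_disjoint]
    rw [Finset.disjoint_filter]
    rintro A _ ⟨hkA, _⟩ ⟨hkA', _⟩
    exact hkA' hkA
  rw [hsplit, Nat.mul_add]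
  congr 1
  · -- k ∈ A term
    by_cases h1 : i + 1 ≤ B
    · rw [countI N B k i (B - i - 1) (by omega) hk2 (by omega),
        binN_eq _ _ (B - i - 1) (by omega)]
    · rw [emptyI N B k i (by omega), binN_neg _ _ (by omega), Nat.mul_zero]
  · -- k ∉ A term
    by_cases h2 : k - 1 - i ≤ B
    · rw [countO N B k (k - 1 - i) (B - (k - 1 - i)) (by omega) hk2 (by omega),
        Nat.choose_symm hi]
      congr 1
      by_cases h3 : B + i + 1 ≤ N
      · rw [binN_eq _ _ (N - B - i - 1) (by omega)]
        have hm : B - (k - 1 - i) ≤ N - k := by omega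
        rw [← Nat.choose_symm hm]
        congr 1
        omega
      · rw [binN_neg _ _ (by omega), Nat.choose_eq_zero_of_lt (by omega)]
    · rw [emptyO N B k (k - 1 - i) (by omega)]
      have hz : binN (N - k) ((N : ℤ) - (B : ℤ) - ((i : ℤ) + 1)) = 0 := by
        by_cases h3 : B + i + 1 ≤ N
        · rw [binN_eq _ _ (N - B - i - 1) (by omega)]
          exact Nat.choose_eq_zero_of_lt (by omega)
        · exact binN_neg _ _ (by omega)
      rw [hz, Nat.mul_zero]
end

section
/- Let N ≥ 2, 1 ≤ B ≤ N-1, 2 ≤ k ≤ N, and 0 ≤ i ≤ k-1. Then, as an identity of rational numbers, C(k-1, i) · ( C(N-k, B-(i+1)) + C(N-k, N-B-(i+1)) ) / C(N, B) = (B/N) · C(B-1, i) · C(N-B, k-1-i) / C(N-1, k-1) + ((N-B)/N) · C(B, k-1-i) · C(N-B-1, i) / C(N-1, k-1), with the convention that C(a, b) = 0 whenever b < 0 or b > a. (That is, the law of W_k for a uniformly random size-B subset of {1,…,N} is the mixture, with weights B/N and (N-B)/N, of the Hypergeometric(B-1, N-1, k-1) and Hypergeometric(N-B-1, N-1, k-1)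 distributions.) -/
/-- Binomial coefficient `C(a, b)` for an integer lower index, with the convention that
it is `0` when `b < 0` (and, via `Nat.choose`, when `b > a`). -/
def binQ (a : ℕ) (b : ℤ) : ℚ :=
  if 0 ≤ b then (a.choose b.toNat : ℚ) else 0

/-- Choosing `a` then `c` from the remainder equals choosing `c` then `a`. -/
lemma choose_swap (n a c : ℕ) :
    n.choose a * (n - a).choose c = n.choose c * (n - c).choose a := by
  rcases le_or_gt (a + c) n with h | h
  · have h1 := Nat.choose_mul (n := n) (k := a + c) (s := a) (Nat.le_add_right _ _)
    have h2 := Nat.choose_mul (n := n) (k := a + c) (s := c) (Nat.le_add_left _ _)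
    rw [Nat.add_sub_cancel_left] at h1
    rw [Nat.add_sub_cancel] at h2
    have hs : (a + c).choose a = (a + c).choose c := by
      rw [← Nat.choose_symm (Nat.le_add_right _ _), Nat.add_sub_cancel_left]
    rw [← h1, ← h2, hs]
  · rcases le_or_gt a n with ha | ha
    · rcases le_or_gt c n with hc | hc
      · rw [Nat.choose_eq_zero_of_lt (by omega : n - a < c),
          Nat.choose_eq_zero_of_lt (by omega : n - c < a)]
        ring
      · rw [Nat.choose_eq_zero_of_lt hc]
        rw [Nat.choose_eq_zero_of_lt (by omega : n - a < c)]
        ring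
    · rw [Nat.choose_eq_zero_of_lt ha, Nat.choose_eq_zero_of_lt (by omega : n - c < a)]
      ring

lemma key (m K Bb i : ℕ) (hK : K ≤ m) (hBb : Bb ≤ m) (hiK : i ≤ K) (hiB : i ≤ Bb) :
    K.choose i * ((m - K).choose (Bb - i) * m.choose K) =
      Bb.choose i * ((m - Bb).choose (K - i) * m.choose Bb) := by
  have h1 := Nat.choose_mul (n := m) hiK
  have h2 := Nat.choose_mul (n := m) hiB
  have h3 := choose_swap (m - i) (K - i) (Bb - i)
  have e1 : m - i - (K - i) = m - K := by omega
  have e2 : m - i - (Bb - i) = m - Bb := by omega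
  rw [e1, e2] at h3
  calc K.choose i * ((m - K).choose (Bb - i) * m.choose K)
      = m.choose K * K.choose i * (m - K).choose (Bb - i) := by ring
    _ = m.choose i * ((m - i).choose (K - i) * (m - K).choose (Bb - i)) := by rw [h1]; ring
    _ = m.choose i * ((m - i).choose (Bb - i) * (m - Bb).choose (K - i)) := by rw [h3]
    _ = m.choose Bb * Bb.choose i * (m - Bb).choose (K - i) := by rw [h2]; ring
    _ = Bb.choose i * ((m - Bb).choose (K - i) * m.choose Bb) := by ring

lemma lemA (n b k i : ℕ) (hb1 : 1 ≤ b) (hb2 : b ≤ n - 1) (hk1 : 2 ≤ k) (hk2 : k ≤ n)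
    (hi : i ≤ k - 1) :
    ((k - 1).choose i : ℚ) * binQ (n - k) ((b : ℤ) - ((i : ℤ) + 1)) / (n.choose b : ℚ) =
      ((b : ℚ) / (n : ℚ)) *
        (((b - 1).choose i : ℚ) * ((n - b).choose (k - 1 - i) : ℚ) /
          ((n - 1).choose (k - 1) : ℚ)) := by
  have hn : 2 ≤ n := le_trans hk1 hk2
  rcases le_or_gt b i with hbi | hbi
  · -- both sides are zero
    rw [binQ, if_neg (by omega)]
    rw [Nat.choose_eq_zero_of_lt (by omega : b - 1 < i)]
    simp
  · -- in range
    rw [binQ, if_pos (by omega)]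
    have ht : ((b : ℤ) - ((i : ℤ) + 1)).toNat = b - 1 - i := by omega
    rw [ht]
    have hnb : (n.choose b : ℚ) ≠ 0 := by
      exact_mod_cast Nat.choose_pos (by omega : b ≤ n) |>.ne'
    have hn0 : (n : ℚ) ≠ 0 := by positivity
    have hnk : ((n - 1).choose (k - 1) : ℚ) ≠ 0 := by
      exact_mod_cast Nat.choose_pos (by omega : k - 1 ≤ n - 1) |>.ne'
    rw [div_mul_div_comm, div_eq_div_iff hnb (by positivity)]
    -- reduce to a natural-number identity
    have hbn : b * n.choose b = n * (n - 1).choose (b - 1) := by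
      have := Nat.add_one_mul_choose_eq (n - 1) (b - 1)
      have e1 : n - 1 + 1 = n := by omega
      have e2 : b - 1 + 1 = b := by omega
      rw [e1, e2] at this
      rw [Nat.mul_comm b]
      exact this.symm
    have hkey := key (n - 1) (k - 1) (b - 1) i (by omega) (by omega) hi (by omega)
    have e3 : n - 1 - (k - 1) = n - k := by omega
    have e4 : n - 1 - (b - 1) = n - b := by omega
    have e5 : b - 1 - i = b - 1 - i := rfl
    rw [e3, e4] at hkey
    have hkeyQ : ((k - 1).choose i : ℚ) * ((n - k).choose (b - 1 - i) * (n - 1).choose (k - 1)) =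
        ((b - 1).choose i : ℚ) * ((n - b).choose (k - 1 - i) * (n - 1).choose (b - 1)) := by
      exact_mod_cast hkey
    have hbnQ : (b : ℚ) * n.choose b = (n : ℚ) * (n - 1).choose (b - 1) := by
      exact_mod_cast hbn
    linear_combination (n : ℚ) * hkeyQ -
      (((b - 1).choose i : ℚ) * ((n - b).choose (k - 1 - i) : ℚ)) * hbnQ

/-- The law of `W_k` for a uniformly random size-`B` subset of
`{1, …, N}` is the mixture, with weights `B/N` and `(N-B)/N`, of the
`Hypergeometric(B-1, N-1, k-1)` and `Hypergeometric(N-B-1, N-1, k-1)` distributions. -/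
theorem hypergeometric_mixture (N B k i : ℕ) (hN : 2 ≤ N) (hB1 : 1 ≤ B) (hB2 : B ≤ N - 1)
    (hk1 : 2 ≤ k) (hk2 : k ≤ N) (hi : i ≤ k - 1) :
    ((k - 1).choose i : ℚ) *
        (binQ (N - k) ((B : ℤ) - ((i : ℤ) + 1)) +
          binQ (N - k) ((N : ℤ) - (B : ℤ) - ((i : ℤ) + 1))) / (N.choose B : ℚ) =
      ((B : ℚ) / (N : ℚ)) *
          (((B - 1).choose i : ℚ) * ((N - B).choose (k - 1 - i) : ℚ) /
            ((N - 1).choose (k - 1) : ℚ)) +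
        (((N : ℚ) - (B : ℚ)) / (N : ℚ)) *
          ((B.choose (k - 1 - i) : ℚ) * ((N - B - 1).choose i : ℚ) /
            ((N - 1).choose (k - 1) : ℚ)) := by
  have h1 := lemA N B k i hB1 hB2 hk1 hk2 hi
  have h2 := lemA N (N - B) k i (by omega) (by omega) hk1 hk2 hi
  have e1 : ((N - B : ℕ) : ℤ) = (N : ℤ) - (B : ℤ) := by omega
  have e2 : N - (N - B) = B := by omega
  have e3 : N.choose (N - B) = N.choose B := Nat.choose_symm (by omega)
  rw [e1, e2, e3] at h2
  have ecast : ((N - B : ℕ) : ℚ) = (N : ℚ) - (B : ℚ) := by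
    have h : B ≤ N := by omega
    push_cast [h]
    ring
  rw [ecast] at h2
  rw [mul_add, add_div, h1, h2]
  ring
end

section
/- Let N ≥ 3 and let w_3, …, w_N be natural numbers with w_k ≤ k-1 for every k ∈ {3, …, N}. Let s be a natural number with s < #{ k ∈ {3, …, N} : w_k ≥ 1 }. Then lim_{α → ∞} α^{s} / ∏_{k=3}^{N} ((k-1-w_k) + α·w_k) = 0. -/
open scoped BigOperators

/-- If `w_k ≤ k-1` for `k ∈ {3, …, N}` and
`s < #{k ∈ {3, …, N} : w_k ≥ 1}`, then
`lim_{α → ∞} α^s / ∏_{k=3}^{N} ((k-1-w_k) + α w_k) = 0`. -/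
theorem limit_not_perfect (N : ℕ) (hN : 3 ≤ N) (w : ℕ → ℕ)
    (hw : ∀ k ∈ Finset.Icc 3 N, w k ≤ k - 1)
    (s : ℕ) (hs : s < ((Finset.Icc 3 N).filter fun k => 1 ≤ w k).card) :
    Filter.Tendsto
      (fun α : ℝ => α ^ s /
        ∏ k ∈ Finset.Icc 3 N, (((k : ℝ) - 1 - (w k : ℝ)) + α * (w k : ℝ)))
      Filter.atTop (nhds 0) := by
  set S := Finset.Icc 3 N
  set m := (S.filter fun k => 1 ≤ w k).card with hm
  -- key lower bound
  have key : ∀ α : ℝ, 1 ≤ α →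
      α ^ m ≤ ∏ k ∈ S, (((k : ℝ) - 1 - (w k : ℝ)) + α * (w k : ℝ)) := by
    intro α hα
    have h0 : (0:ℝ) < α := lt_of_lt_of_le zero_lt_one hα
    calc α ^ m = ∏ k ∈ S, (if 1 ≤ w k then α else 1) := by
          rw [Finset.prod_ite, Finset.prod_const, Finset.prod_const_one, mul_one]
      _ ≤ _ := by
          apply Finset.prod_le_prod
          · intro k _; split <;> positivity
          · intro k hk
            have hk3 : 3 ≤ k := (Finset.mem_Icc.mp hk).1
            have hcast : (w k : ℝ) ≤ (k : ℝ) - 1 := by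
              have := hw k hk
              have : (w k : ℝ) ≤ ((k - 1 : ℕ) : ℝ) := by exact_mod_cast this
              calc (w k : ℝ) ≤ ((k - 1 : ℕ) : ℝ) := this
                _ = (k : ℝ) - 1 := by
                    have : 1 ≤ k := by omega
                    push_cast [this]; ring
            have hnn : (0:ℝ) ≤ (k : ℝ) - 1 - (w k : ℝ) := by linarith
            split
            · rename_i hwk
              have : (1:ℝ) ≤ (w k : ℝ) := by exact_mod_cast hwk
              nlinarith
            · rename_i hwk
              have hw0 : w k = 0 := by omega
              rw [hw0]
              push_cast
              have : (3:ℝ) ≤ (k:ℝ) := by exact_mod_cast hk3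
              linarith
  have hsm : s + 1 ≤ m := hs
  apply squeeze_zero' (g := fun α : ℝ => α⁻¹)
  · filter_upwards [Filter.eventually_ge_atTop (1:ℝ)] with α hα
    have h0 : (0:ℝ) < α := lt_of_lt_of_le zero_lt_one hα
    have hp : (0:ℝ) < ∏ k ∈ S, (((k : ℝ) - 1 - (w k : ℝ)) + α * (w k : ℝ)) :=
      lt_of_lt_of_le (by positivity) (key α hα)
    positivity
  · filter_upwards [Filter.eventually_ge_atTop (1:ℝ)] with α hα
    have h0 : (0:ℝ) < α := lt_of_lt_of_le zero_lt_one hα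
    have h1 : α ^ (s+1) ≤ ∏ k ∈ S, (((k : ℝ) - 1 - (w k : ℝ)) + α * (w k : ℝ)) :=
      le_trans (pow_le_pow_right₀ hα hsm) (key α hα)
    have hp : (0:ℝ) < α ^ (s+1) := by positivity
    calc α ^ s / ∏ k ∈ S, (((k : ℝ) - 1 - (w k : ℝ)) + α * (w k : ℝ))
        ≤ α ^ s / α ^ (s+1) := by
          apply div_le_div_of_nonneg_left (by positivity) hp h1
      _ = α⁻¹ := by
          rw [pow_succ, div_mul_eq_div_div, div_self (by positivity), one_div]
  · exact tendsto_inv_atTop_zero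
end

section
/- Define e : ℕ → ℚ by e(1) = e(2) = 1 and, for N ≥ 3, e(N) = (1/2) · ∑_{k=0}^{N-2} C(N-2, k) · e(k+1) · e(N-k-1). Define R : ℕ × ℕ → ℚ by the base cases R(1,0) = R(1,1) = 1, R(2,0) = R(2,1) = R(2,2) = 1, R(n,b) = 0 when b > n, and for N ≥ 3 and 0 ≤ B ≤ N, R(N, B) = (1/2) · ∑_{n=1}^{N-1} ∑_{b=0}^{min(B, n)} R(n, b) · R(N-n, B-b) · C(N-2, n-1). Then for every N ≥ 1, R(N, 0) = R(N, N) = e(N). -/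
open scoped BigOperators

/-- Let `e : ℕ → ℚ` satisfy the Euler zig-zag recursion
(`e 1 = e 2 = 1` and, for `N ≥ 3`, `e N = (1/2) ∑_{k=0}^{N-2} C(N-2, k) e(k+1) e(N-k-1)`)
and let `R : ℕ → ℕ → ℚ` satisfy the ranked partially labeled tree recursion
(base cases `R 1 0 = R 1 1 = 1`, `R 2 0 = R 2 1 = R 2 2 = 1`, `R n b = 0` for `b > n`,
and for `N ≥ 3`, `0 ≤ B ≤ N`,
`R N B = (1/2) ∑_{n=1}^{N-1} ∑_{b=0}^{min(B,n)} R(n,b) R(N-n, B-b) C(N-2, n-1)`).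
Then `R N 0 = R N N = e N` for every `N ≥ 1`. -/
theorem rankedPartiallyLabeled_monochromatic_eq_zigzag
    (e : ℕ → ℚ) (R : ℕ → ℕ → ℚ)
    (he1 : e 1 = 1) (he2 : e 2 = 1)
    (heRec : ∀ N, 3 ≤ N →
      e N = (1 / 2) * ∑ k ∈ Finset.range (N - 1),
        ((N - 2).choose k : ℚ) * e (k + 1) * e (N - k - 1))
    (hR10 : R 1 0 = 1) (hR11 : R 1 1 = 1)
    (hR20 : R 2 0 = 1) (hR21 : R 2 1 = 1) (hR22 : R 2 2 = 1)
    (hRzero : ∀ n b, n < b → R n b = 0)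
    (hRRec : ∀ N B, 3 ≤ N → B ≤ N →
      R N B = (1 / 2) * ∑ n ∈ Finset.Icc 1 (N - 1), ∑ b ∈ Finset.Icc 0 (min B n),
        R n b * R (N - n) (B - b) * ((N - 2).choose (n - 1) : ℚ)) :
    ∀ N, 1 ≤ N → R N 0 = e N ∧ R N N = e N := by

  intro N
  induction N using Nat.strong_induction_on with
  | _ N ih =>
    intro hN
    rcases Nat.lt_or_ge N 3 with h3 | h3
    · interval_cases N
      · exact ⟨by rw [hR10, he1], by rw [hR11, he1]⟩
      · exact ⟨by rw [hR20, he2], by rw [hR22, he2]⟩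
    · have hkey : ∀ k ∈ Finset.range (N - 1),
          (R (1 + k) 0 = e (1 + k) ∧ R (1 + k) (1 + k) = e (1 + k)) ∧
          (R (N - (1 + k)) 0 = e (N - (1 + k)) ∧
            R (N - (1 + k)) (N - (1 + k)) = e (N - (1 + k))) := by
        intro k hk
        simp only [Finset.mem_range] at hk
        exact ⟨ih (1 + k) (by omega) (by omega), ih (N - (1 + k)) (by omega) (by omega)⟩
      constructor
      · rw [hRRec N 0 h3 (Nat.zero_le _), heRec N h3]
        congr 1
        rw [show Finset.Icc 1 (N - 1) = Finset.Ico 1 N by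
          ext x; simp [Finset.mem_Icc, Finset.mem_Ico]; omega]
        rw [Finset.sum_Ico_eq_sum_range]
        rw [show N - 1 = N - 1 from rfl]
        apply Finset.sum_congr rfl
        intro k hk
        obtain ⟨⟨h1, _⟩, ⟨h2, _⟩⟩ := hkey k hk
        have hmin : min 0 (1 + k) = 0 := by omega
        rw [hmin, Finset.Icc_self, Finset.sum_singleton,
          show (1 : ℕ) + k - 1 = k by omega, show (0 : ℕ) - 0 = 0 from rfl,
          show (1 : ℕ) + k = k + 1 by omega, show N - (k + 1) = N - k - 1 by omega]
        rw [show (1 : ℕ) + k = k + 1 by omega] at h1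
        rw [show N - (1 + k) = N - k - 1 by omega] at h2
        rw [h1, h2]; ring
      · rw [hRRec N N h3 le_rfl, heRec N h3]
        congr 1
        rw [show Finset.Icc 1 (N - 1) = Finset.Ico 1 N by
          ext x; simp [Finset.mem_Icc, Finset.mem_Ico]; omega]
        rw [Finset.sum_Ico_eq_sum_range]
        rw [show N - 1 = N - 1 from rfl]
        apply Finset.sum_congr rfl
        intro k hk
        obtain ⟨⟨_, h1⟩, ⟨_, h2⟩⟩ := hkey k hk
        simp only [Finset.mem_range] at hk
        have hmin : min N (1 + k) = 1 + k := by omega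
        rw [hmin]
        rw [Finset.sum_eq_single_of_mem (1 + k) (by simp)]
        · rw [show (1 : ℕ) + k - 1 = k by omega,
            show N - (1 + k) = N - k - 1 by omega, h1,
            show (1 : ℕ) + k = k + 1 by omega]
          rw [show N - (1 + k) = N - k - 1 by omega] at h2
          rw [h2]; ring
        · intro b hb hne
          have hb' : b ≤ 1 + k := (Finset.mem_Icc.mp hb).2
          have : N - (1 + k) < N - b := by omega
          rw [hRzero _ _ this]
          ring
end
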